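/- arXiv:2202.05580 — 5 statements merged into one kernel-verified Lean document; each statement's English description precedes it below -/
import Mathlib

section
/- For 1 ≤ d ≤ n−1 with 2d ≤ n, the variance of the number of d-descents of a uniformly random permutation in S_n equals (n+d)/12. -/
/-!
With `n = m + d`, the number of `d`-descents of `σ` is the sum over `i < m` of the indicators of
`σ (i + d) < σ i`. Averaging over right translates of `σ` by permutations of the positions
involved, one such indicator has mean `1/2`, the product of two on disjoint pairs has mean `1/4`,
and on a chain `(i, i + d)`, `(i + d, i + 2d)` it has mean `1/6` (one of the six orderings of three
values). There are `m - d` chains in each direction, so the second moment is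
`m²/4 + m/4 - (m - d)/6`; subtracting `(m/2)²` leaves `(m + 2d)/12 = (n + d)/12` when `d ≤ m`.
-/

open Finset Equiv

theorem sum_range_sum_range_ite_eq (m d : ℕ) (hd : d ≠ 0) (A B C : ℚ) :
    ∑ i ∈ range m, ∑ j ∈ range m,
        (if i = j then B else if j = i + d ∨ i = j + d then C else A) =
      m ^ 2 * A + m * (B - A) + 2 * (m - d : ℕ) * (C - A) := by
  have hsplit : ∀ i j : ℕ, (if i = j then B else if j = i + d ∨ i = j + d then C else A) =
      A + ((if i = j then B - A else 0) +
        ((if j = i + d then C - A else 0) + (if i = j + d then C - A else 0))) := by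
    intro i j
    split_ifs <;> first | omega | ring
  have hshift : ∀ c : ℚ, ∑ i ∈ range m, ∑ j ∈ range m, (if j = i + d then c else 0) =
      (m - d : ℕ) * c := by
    intro c
    have : (range m).filter (fun i => i + d < m) = range (m - d) := by
      ext i
      simp only [mem_filter, mem_range]
      omega
    simp only [sum_ite_eq', mem_range, ← sum_filter, this, sum_const, card_range, nsmul_eq_mul]
  simp only [hsplit, sum_add_distrib, sum_ite_eq, sum_ite_mem, inter_self, hshift]
  rw [sum_comm (f := fun i j => if i = j + d then C - A else 0), hshift]
  simp only [sum_const, card_range, nsmul_eq_mul]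
  ring

namespace Equiv.Perm

theorem sum_eq_factorial_div_of_sum_mul_right_eq_one {α : Type*} [Fintype α] [DecidableEq α]
    {k : ℕ} (f : Perm α → ℚ) (g : Fin k → Perm α) (hf : ∀ σ, ∑ i, f (σ * g i) = 1) :
    ∑ σ, f σ = (Fintype.card α).factorial / k := by
  have hk : (k : ℚ) ≠ 0 := by
    rintro hk
    obtain rfl : k = 0 := by exact_mod_cast hk
    simpa using hf 1
  rw [eq_div_iff hk, mul_comm]
  calc (k : ℚ) * ∑ σ, f σ = ∑ i : Fin k, ∑ σ, f σ := by simp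
    _ = ∑ i, ∑ σ, f (σ * g i) :=
        sum_congr rfl fun i _ => (Fintype.sum_equiv (Equiv.mulRight (g i)) _ _ fun _ => rfl).symm
    _ = ∑ σ : Perm α, ∑ i, f (σ * g i) := sum_comm
    _ = _ := by simp [hf, Fintype.card_perm]

section Inversions

variable {α : Type*} [LinearOrder α]

def inversionIndicator (σ : Perm α) (a b : α) : ℚ := if σ b < σ a then 1 else 0

theorem inversionIndicator_mul_self (σ : Perm α) (a b : α) :
    σ.inversionIndicator a b * σ.inversionIndicator a b = σ.inversionIndicator a b := by
  unfold inversionIndicator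
  split_ifs <;> norm_num

variable [Fintype α]

theorem sum_inversionIndicator {a b : α} (hab : a ≠ b) :
    ∑ σ : Perm α, σ.inversionIndicator a b = (Fintype.card α).factorial / 2 := by
  refine sum_eq_factorial_div_of_sum_mul_right_eq_one _ ![1, swap a b] fun σ => ?_
  rcases (σ.injective.ne hab).lt_or_gt with h | h <;>
    simp [inversionIndicator, h, h.not_gt]

theorem sum_inversionIndicator_mul_of_pairwise_ne {a b c e : α} (hab : a ≠ b) (hac : a ≠ c)
    (hae : a ≠ e) (hbc : b ≠ c) (hbe : b ≠ e) (hce : c ≠ e) :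
    ∑ σ : Perm α, σ.inversionIndicator a b * σ.inversionIndicator c e =
      (Fintype.card α).factorial / 4 := by
  refine sum_eq_factorial_div_of_sum_mul_right_eq_one _
    ![1, swap a b, swap c e, swap a b * swap c e] fun σ => ?_
  simp only [Fin.sum_univ_four, Matrix.cons_val, inversionIndicator, Perm.mul_apply, one_apply,
    swap_apply_left, swap_apply_right, swap_apply_of_ne_of_ne, hac, hae, hbc, hbe, hac.symm,
    hae.symm, hbc.symm, hbe.symm, Ne, not_false_eq_true]
  rcases (σ.injective.ne hab).lt_or_gt with h | h <;>
    rcases (σ.injective.ne hce).lt_or_gt with h' | h' <;>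
    simp [h, h', h.not_gt, h'.not_gt]

theorem sum_inversionIndicator_mul_inversionIndicator {a b c : α} (hab : a ≠ b) (hac : a ≠ c)
    (hbc : b ≠ c) :
    ∑ σ : Perm α, σ.inversionIndicator a b * σ.inversionIndicator b c =
      (Fintype.card α).factorial / 6 := by
  refine sum_eq_factorial_div_of_sum_mul_right_eq_one _
    ![1, swap a b, swap b c, swap a c, swap a b * swap b c, swap b c * swap a b] fun σ => ?_
  simp only [Fin.sum_univ_six, Matrix.cons_val, inversionIndicator, Perm.mul_apply, one_apply,
    swap_apply_left, swap_apply_right, swap_apply_of_ne_of_ne, hab, hac, hbc, hab.symm,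
    hac.symm, hbc.symm, Ne, not_false_eq_true]
  rcases (σ.injective.ne hab).lt_or_gt with h₁ | h₁ <;>
    rcases (σ.injective.ne hac).lt_or_gt with h₂ | h₂ <;>
    rcases (σ.injective.ne hbc).lt_or_gt with h₃ | h₃ <;>
    simp [h₁, h₂, h₃, h₁.not_gt, h₂.not_gt, h₃.not_gt] <;> order

end Inversions

def dDescentPairs {n : ℕ} (d : ℕ) (σ : Perm (Fin n)) : Finset (Fin n × Fin n) :=
  {p | (p.2 : ℕ) = p.1 + d ∧ σ p.2 < σ p.1}

variable {m d : ℕ}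

theorem card_dDescentPairs_eq_sum (σ : Perm (Fin (m + d))) :
    (#(dDescentPairs d σ) : ℚ) =
      ∑ i : Fin m, σ.inversionIndicator (Fin.castAdd d i) (Fin.addNat i d) := by
  simp only [inversionIndicator, sum_boole]
  congr 1
  symm
  refine card_bij (fun i _ => (Fin.castAdd d i, Fin.addNat i d)) ?_ ?_ ?_
  · intro i hi
    simpa [dDescentPairs] using hi
  · intro i _ j _ h
    simpa [Fin.ext_iff] using h
  · rintro ⟨a, b⟩ hp
    simp only [dDescentPairs, mem_filter, mem_univ, true_and] at hp
    obtain ⟨hb, hlt⟩ := hp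
    have ha : (a : ℕ) < m := by omega
    have hb' : Fin.addNat ⟨a, ha⟩ d = b := Fin.ext (by simp [hb])
    exact ⟨⟨a, ha⟩, by simpa [hb'] using hlt, by rw [hb']; rfl⟩

theorem sum_inversionIndicator_mul_shift (hd : d ≠ 0) (i j : Fin m) :
    ∑ σ : Perm (Fin (m + d)),
        σ.inversionIndicator (Fin.castAdd d i) (Fin.addNat i d) *
          σ.inversionIndicator (Fin.castAdd d j) (Fin.addNat j d) =
      if (i : ℕ) = j then ((m + d).factorial : ℚ) / 2
      else if (j : ℕ) = i + d ∨ (i : ℕ) = j + d then ((m + d).factorial : ℚ) / 6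
      else ((m + d).factorial : ℚ) / 4 := by
  have hne : ∀ {x y : Fin (m + d)}, (x : ℕ) ≠ y → x ≠ y := Fin.ne_of_val_ne
  split_ifs with hij hadj
  · obtain rfl := Fin.ext hij
    simp only [inversionIndicator_mul_self]
    rw [sum_inversionIndicator, Fintype.card_fin]
    exact hne (by simp; omega)
  · rcases hadj with hj | hi
    · rw [show Fin.addNat i d = Fin.castAdd d j from Fin.ext (by simp [hj]),
        sum_inversionIndicator_mul_inversionIndicator, Fintype.card_fin] <;>
        exact hne (by simp; omega)
    · simp_rw [mul_comm (inversionIndicator _ (Fin.castAdd d i) _)]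
      rw [show Fin.addNat j d = Fin.castAdd d i from Fin.ext (by simp [hi]),
        sum_inversionIndicator_mul_inversionIndicator, Fintype.card_fin] <;>
        exact hne (by simp; omega)
  · rw [sum_inversionIndicator_mul_of_pairwise_ne, Fintype.card_fin] <;>
      exact hne (by simp; omega)

theorem sum_card_dDescentPairs (hd : d ≠ 0) :
    ∑ σ : Perm (Fin (m + d)), (#(dDescentPairs d σ) : ℚ) = m * (m + d).factorial / 2 := by
  simp only [card_dDescentPairs_eq_sum]
  rw [sum_comm, sum_congr rfl fun i _ => sum_inversionIndicator (Fin.ne_of_val_ne (by simp; omega))]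
  simp [mul_div_assoc]

theorem sum_card_dDescentPairs_sq (hd : d ≠ 0) :
    ∑ σ : Perm (Fin (m + d)), (#(dDescentPairs d σ) : ℚ) ^ 2 =
      (m + d).factorial * (m ^ 2 / 4 + m / 4 - (m - d : ℕ) / 6) := by
  set Q : ℚ := ((m + d).factorial : ℚ)
  let w : ℕ → ℕ → ℚ := fun i j =>
    if i = j then Q / 2 else if j = i + d ∨ i = j + d then Q / 6 else Q / 4
  calc ∑ σ : Perm (Fin (m + d)), (#(dDescentPairs d σ) : ℚ) ^ 2
      = ∑ i : Fin m, ∑ j : Fin m, ∑ σ : Perm (Fin (m + d)),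
          σ.inversionIndicator (Fin.castAdd d i) (Fin.addNat i d) *
            σ.inversionIndicator (Fin.castAdd d j) (Fin.addNat j d) := by
        simp only [card_dDescentPairs_eq_sum, sq, sum_mul_sum]
        rw [sum_comm]
        exact sum_congr rfl fun i _ => sum_comm
    _ = ∑ i : Fin m, ∑ j : Fin m, w i j := by
        simp only [sum_inversionIndicator_mul_shift hd, w, Q]
    _ = ∑ i ∈ range m, ∑ j ∈ range m, w i j := by
        rw [← Fin.sum_univ_eq_sum_range (fun i => ∑ j ∈ range m, w i j)]
        simp only [Fin.sum_univ_eq_sum_range]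
    _ = Q * (m ^ 2 / 4 + m / 4 - (m - d : ℕ) / 6) := by
        rw [sum_range_sum_range_ite_eq m d hd]
        ring

end Equiv.Perm

theorem var_d_descents_small_d_general (n d : ℕ) (hd : 1 ≤ d) (h2 : 2 * d ≤ n) :
    let N : ℚ := Fintype.card (Equiv.Perm (Fin n))
    let X : Equiv.Perm (Fin n) → ℚ := fun σ =>
      ((Finset.univ.filter fun p : Fin n × Fin n =>
        (p.2 : ℕ) = (p.1 : ℕ) + d ∧ σ p.2 < σ p.1).card : ℚ)
    (∑ σ : Equiv.Perm (Fin n), X σ ^ 2) / N - ((∑ σ : Equiv.Perm (Fin n), X σ) / N) ^ 2 =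
      ((n : ℚ) + d) / 12 := by
  intro N X
  obtain ⟨m, rfl⟩ : ∃ m, n = m + d := ⟨n - d, by omega⟩
  have hN : N = (m + d).factorial := by simp [N, Fintype.card_perm]
  change (∑ σ, (#(Perm.dDescentPairs d σ) : ℚ) ^ 2) / N -
    ((∑ σ, (#(Perm.dDescentPairs d σ) : ℚ)) / N) ^ 2 = _
  rw [Perm.sum_card_dDescentPairs (by omega), Perm.sum_card_dDescentPairs_sq (by omega), hN,
    Nat.cast_sub (by omega)]
  field_simp
  push_cast
  ring

/-- For `1 ≤ d ≤ n-1` with `2d ≤ n`, the variance of the number of `d`-descents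
of a uniformly random permutation in `S_n` equals `(n+d)/12`. -/
theorem var_d_descents_small_d (n d : ℕ) (hd : 1 ≤ d) (hdn : d ≤ n - 1) (h2 : 2 * d ≤ n) :
    let N : ℚ := Fintype.card (Equiv.Perm (Fin n))
    let X : Equiv.Perm (Fin n) → ℚ := fun σ =>
      ((Finset.univ.filter fun p : Fin n × Fin n =>
        (p.2 : ℕ) = (p.1 : ℕ) + d ∧ σ p.2 < σ p.1).card : ℚ)
    (∑ σ : Equiv.Perm (Fin n), X σ ^ 2) / N - ((∑ σ : Equiv.Perm (Fin n), X σ) / N) ^ 2 =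
      ((n : ℚ) + d) / 12 :=
  var_d_descents_small_d_general n d hd h2
end

section
/- For 1 ≤ d ≤ n−1 with 2d ≥ n, the variance of the number of d-descents of a uniformly random permutation in S_n equals (n−d)/4. -/
open Finset

section aux

variable {n : ℕ}

lemma perm_half (a b : Fin n) (hab : a ≠ b) :
    (Finset.univ.filter fun σ : Equiv.Perm (Fin n) => σ b < σ a).card * 2 =
      Fintype.card (Equiv.Perm (Fin n)) := by
  have key : (Finset.univ.filter fun σ : Equiv.Perm (Fin n) => σ b < σ a).card =
      (Finset.univ.filter fun σ : Equiv.Perm (Fin n) => σ a < σ b).card := by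
    refine Finset.card_nbij' (fun σ => σ * Equiv.swap a b) (fun σ => σ * Equiv.swap a b)
      ?_ ?_ ?_ ?_
    · intro σ hσ
      simp only [mem_filter, mem_univ, true_and] at hσ ⊢
      simpa [Equiv.Perm.mul_apply] using hσ
    · intro σ hσ
      simp only [mem_filter, mem_univ, true_and] at hσ ⊢
      simpa [Equiv.Perm.mul_apply] using hσ
    · intro σ _; simp [mul_assoc]
    · intro σ _; simp [mul_assoc]
  have compl : (Finset.univ.filter fun σ : Equiv.Perm (Fin n) => σ a < σ b) =
      (Finset.univ.filter fun σ : Equiv.Perm (Fin n) => ¬ σ b < σ a) := by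
    apply Finset.filter_congr
    intro σ _
    constructor
    · intro h; exact fun h' => absurd (h.trans h') (lt_irrefl _)
    · intro h
      exact lt_of_le_of_ne (not_lt.mp h) (fun he => hab (σ.injective he.symm).symm)
  have htot := Finset.card_filter_add_card_filter_not
    (s := (Finset.univ : Finset (Equiv.Perm (Fin n))))
    (fun σ : Equiv.Perm (Fin n) => σ b < σ a)
  rw [Finset.card_univ] at htot
  rw [compl] at key
  omega

lemma perm_quarter (a b a' b' : Fin n) (hab : a ≠ b) (hab' : a' ≠ b')
    (haa' : a ≠ a') (hba' : b ≠ a') (hab2 : a ≠ b') (hbb' : b ≠ b') :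
    (Finset.univ.filter fun σ : Equiv.Perm (Fin n) =>
        σ b < σ a ∧ σ b' < σ a').card * 4 = Fintype.card (Equiv.Perm (Fin n)) := by
  have key : (Finset.univ.filter fun σ : Equiv.Perm (Fin n) => σ b < σ a ∧ σ b' < σ a').card =
      (Finset.univ.filter fun σ : Equiv.Perm (Fin n) => σ b < σ a ∧ σ a' < σ b').card := by
    refine Finset.card_nbij' (fun σ => σ * Equiv.swap a' b') (fun σ => σ * Equiv.swap a' b')
      ?_ ?_ ?_ ?_
    · intro σ hσ
      simp only [mem_filter, mem_univ, true_and] at hσ ⊢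
      simpa [Equiv.Perm.mul_apply,
        Equiv.swap_apply_of_ne_of_ne haa' hab2, Equiv.swap_apply_of_ne_of_ne hba' hbb']
        using hσ
    · intro σ hσ
      simp only [mem_filter, mem_univ, true_and] at hσ ⊢
      simpa [Equiv.Perm.mul_apply,
        Equiv.swap_apply_of_ne_of_ne haa' hab2, Equiv.swap_apply_of_ne_of_ne hba' hbb']
        using hσ
    · intro σ _; simp [mul_assoc]
    · intro σ _; simp [mul_assoc]
  have compl : (Finset.univ.filter fun σ : Equiv.Perm (Fin n) => σ b < σ a ∧ σ a' < σ b') =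
      ((Finset.univ.filter fun σ : Equiv.Perm (Fin n) => σ b < σ a).filter
        fun σ => ¬ σ b' < σ a') := by
    rw [Finset.filter_filter]
    apply Finset.filter_congr
    intro σ _
    constructor
    · rintro ⟨h1, h2⟩
      exact ⟨h1, fun h' => absurd (h2.trans h') (lt_irrefl _)⟩
    · rintro ⟨h1, h2⟩
      exact ⟨h1, lt_of_le_of_ne (not_lt.mp h2) (fun he => hab' (σ.injective he.symm).symm)⟩
  have split : (Finset.univ.filter fun σ : Equiv.Perm (Fin n) => σ b < σ a ∧ σ b' < σ a')
      = ((Finset.univ.filter fun σ : Equiv.Perm (Fin n) => σ b < σ a).filter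
        fun σ => σ b' < σ a') := by
    rw [Finset.filter_filter]
  have htot := Finset.card_filter_add_card_filter_not
    (s := (Finset.univ.filter fun σ : Equiv.Perm (Fin n) => σ b < σ a))
    (fun σ : Equiv.Perm (Fin n) => σ b' < σ a')
  have hhalf := perm_half a b hab
  rw [compl] at key
  rw [split] at key ⊢
  omega

end aux

/-- For `1 ≤ d ≤ n-1` with `2d ≥ n`, the variance of the number of `d`-descents
of a uniformly random permutation in `S_n` equals `(n-d)/4`. -/
theorem var_d_descents_large_d (n d : ℕ) (hd : 1 ≤ d) (hdn : d ≤ n - 1) (h2 : n ≤ 2 * d) :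
    let N : ℚ := Fintype.card (Equiv.Perm (Fin n))
    let X : Equiv.Perm (Fin n) → ℚ := fun σ =>
      ((Finset.univ.filter fun p : Fin n × Fin n =>
        (p.2 : ℕ) = (p.1 : ℕ) + d ∧ σ p.2 < σ p.1).card : ℚ)
    (∑ σ : Equiv.Perm (Fin n), X σ ^ 2) / N - ((∑ σ : Equiv.Perm (Fin n), X σ) / N) ^ 2 =
      ((n : ℚ) - d) / 4 := by
  intro N X
  have hn2 : 2 ≤ n := by omega
  have hN0 : N ≠ 0 := by
    show (Fintype.card (Equiv.Perm (Fin n)) : ℚ) ≠ 0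
    exact_mod_cast Fintype.card_ne_zero
  set S : Finset (Fin n × Fin n) :=
    Finset.univ.filter (fun p : Fin n × Fin n => (p.2 : ℕ) = (p.1 : ℕ) + d) with hS
  have hmem : ∀ p ∈ S, (p.2 : ℕ) = (p.1 : ℕ) + d := by
    intro p hp
    simpa [hS] using hp
  -- cardinality of S
  have hScard : S.card = n - d := by
    rw [← Finset.card_range (n - d)]
    refine Finset.card_bij' (fun p _ => (p.1 : ℕ))
      (fun i hi => (⟨i, by have := Finset.mem_range.mp hi; omega⟩,
                    ⟨i + d, by have := Finset.mem_range.mp hi; omega⟩)) ?_ ?_ ?_ ?_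
    · intro p hp
      have h1 := hmem p hp
      have h2 := p.2.isLt
      simp only [Finset.mem_range]
      omega
    · intro i hi
      simp [hS]
    · intro p hp
      have h1 := hmem p hp
      refine Prod.ext (Fin.ext rfl) (Fin.ext ?_)
      simpa using h1.symm
    · intro i hi
      rfl
  -- distinctness facts
  have hfst_ne_snd : ∀ p ∈ S, p.1 ≠ p.2 := by
    intro p hp h
    have := hmem p hp
    rw [← h] at this
    omega
  have hdistinct : ∀ p ∈ S, ∀ q ∈ S, p ≠ q →
      p.1 ≠ q.1 ∧ p.2 ≠ q.1 ∧ p.1 ≠ q.2 ∧ p.2 ≠ q.2 := by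
    intro p hp q hq hpq
    have e1 := hmem p hp
    have e2 := hmem q hq
    have h1 := p.2.isLt
    have h2 := q.2.isLt
    have hfst : (p.1 : ℕ) ≠ (q.1 : ℕ) := by
      intro h
      apply hpq
      have : p.1 = q.1 := Fin.ext h
      refine Prod.ext this (Fin.ext ?_)
      omega
    refine ⟨?_, ?_, ?_, ?_⟩ <;> intro h <;>
      (first
        | exact hfst (congrArg Fin.val h)
        | (have := congrArg Fin.val h; omega))
  -- pointwise descriptions
  have hX : ∀ σ : Equiv.Perm (Fin n),
      X σ = ∑ p ∈ S, (if σ p.2 < σ p.1 then (1 : ℚ) else 0) := by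
    intro σ
    show ((Finset.univ.filter fun p : Fin n × Fin n =>
        (p.2 : ℕ) = (p.1 : ℕ) + d ∧ σ p.2 < σ p.1).card : ℚ) = _
    rw [Finset.card_filter]
    push_cast
    rw [hS, Finset.sum_filter]
    apply Finset.sum_congr rfl
    intro p _
    by_cases h1 : (p.2 : ℕ) = (p.1 : ℕ) + d <;> by_cases h2 : σ p.2 < σ p.1 <;>
      simp [h1, h2]
  -- first moment summand
  have hsum1 : ∀ p ∈ S,
      (∑ σ : Equiv.Perm (Fin n), (if σ p.2 < σ p.1 then (1 : ℚ) else 0)) = N / 2 := by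
    intro p hp
    rw [Finset.sum_boole]
    have h := perm_half p.1 p.2 (hfst_ne_snd p hp)
    have : ((Finset.univ.filter fun σ : Equiv.Perm (Fin n) => σ p.2 < σ p.1).card : ℚ) * 2
        = N := by
      show _ = ((Fintype.card (Equiv.Perm (Fin n)) : ℕ) : ℚ)
      exact_mod_cast h
    field_simp
    linarith [this]
  -- second moment summand (off-diagonal)
  have hsum2 : ∀ p ∈ S, ∀ q ∈ S, p ≠ q →
      (∑ σ : Equiv.Perm (Fin n),
        (if σ p.2 < σ p.1 then (1 : ℚ) else 0) * (if σ q.2 < σ q.1 then (1 : ℚ) else 0))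
        = N / 4 := by
    intro p hp q hq hpq
    obtain ⟨h11, h21, h12, h22⟩ := hdistinct p hp q hq hpq
    have hstep : (∑ σ : Equiv.Perm (Fin n),
        (if σ p.2 < σ p.1 then (1 : ℚ) else 0) * (if σ q.2 < σ q.1 then (1 : ℚ) else 0))
        = ∑ σ : Equiv.Perm (Fin n),
          (if σ p.2 < σ p.1 ∧ σ q.2 < σ q.1 then (1 : ℚ) else 0) := by
      apply Finset.sum_congr rfl
      intro σ _
      by_cases h1 : σ p.2 < σ p.1 <;> by_cases h2 : σ q.2 < σ q.1 <;> simp [h1, h2]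
    rw [hstep, Finset.sum_boole]
    have h := perm_quarter p.1 p.2 q.1 q.2 (hfst_ne_snd p hp) (hfst_ne_snd q hq)
      h11 h21 h12 h22
    have : ((Finset.univ.filter fun σ : Equiv.Perm (Fin n) =>
        σ p.2 < σ p.1 ∧ σ q.2 < σ q.1).card : ℚ) * 4 = N := by
      show _ = ((Fintype.card (Equiv.Perm (Fin n)) : ℕ) : ℚ)
      exact_mod_cast h
    field_simp
    linarith [this]
  -- cast of card
  have hm : (S.card : ℚ) = (n : ℚ) - d := by
    rw [hScard]
    have : d ≤ n := by omega
    push_cast [Nat.cast_sub this]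
    ring
  have hm1 : 1 ≤ S.card := by omega
  -- first moment
  have hE1 : (∑ σ : Equiv.Perm (Fin n), X σ) = ((n : ℚ) - d) * (N / 2) := by
    calc (∑ σ : Equiv.Perm (Fin n), X σ)
        = ∑ σ : Equiv.Perm (Fin n), ∑ p ∈ S, (if σ p.2 < σ p.1 then (1 : ℚ) else 0) :=
          Finset.sum_congr rfl (fun σ _ => hX σ)
      _ = ∑ p ∈ S, ∑ σ : Equiv.Perm (Fin n), (if σ p.2 < σ p.1 then (1 : ℚ) else 0) :=
          Finset.sum_comm
      _ = ∑ p ∈ S, N / 2 := Finset.sum_congr rfl hsum1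
      _ = S.card * (N / 2) := by rw [Finset.sum_const, nsmul_eq_mul]
      _ = ((n : ℚ) - d) * (N / 2) := by rw [hm]
  -- second moment
  have hE2 : (∑ σ : Equiv.Perm (Fin n), X σ ^ 2)
      = ((n : ℚ) - d) * (N / 2) + ((n : ℚ) - d) * (((n : ℚ) - d) - 1) * (N / 4) := by
    have step1 : (∑ σ : Equiv.Perm (Fin n), X σ ^ 2)
        = ∑ p ∈ S, ∑ q ∈ S, ∑ σ : Equiv.Perm (Fin n),
            (if σ p.2 < σ p.1 then (1 : ℚ) else 0) * (if σ q.2 < σ q.1 then (1 : ℚ) else 0) := by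
      have pt : ∀ σ : Equiv.Perm (Fin n), X σ ^ 2 = ∑ p ∈ S, ∑ q ∈ S,
          (if σ p.2 < σ p.1 then (1 : ℚ) else 0) * (if σ q.2 < σ q.1 then (1 : ℚ) else 0) := by
        intro σ
        rw [sq, hX σ, Finset.sum_mul_sum]
      calc (∑ σ : Equiv.Perm (Fin n), X σ ^ 2)
          = ∑ σ : Equiv.Perm (Fin n), ∑ p ∈ S, ∑ q ∈ S,
              (if σ p.2 < σ p.1 then (1 : ℚ) else 0) * (if σ q.2 < σ q.1 then (1 : ℚ) else 0) :=
            Finset.sum_congr rfl (fun σ _ => pt σ)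
        _ = ∑ p ∈ S, ∑ σ : Equiv.Perm (Fin n), ∑ q ∈ S,
              (if σ p.2 < σ p.1 then (1 : ℚ) else 0) * (if σ q.2 < σ q.1 then (1 : ℚ) else 0) :=
            Finset.sum_comm
        _ = ∑ p ∈ S, ∑ q ∈ S, ∑ σ : Equiv.Perm (Fin n),
              (if σ p.2 < σ p.1 then (1 : ℚ) else 0) * (if σ q.2 < σ q.1 then (1 : ℚ) else 0) :=
            Finset.sum_congr rfl (fun p _ => Finset.sum_comm)
    rw [step1]
    have inner : ∀ p ∈ S, (∑ q ∈ S, ∑ σ : Equiv.Perm (Fin n),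
        (if σ p.2 < σ p.1 then (1 : ℚ) else 0) * (if σ q.2 < σ q.1 then (1 : ℚ) else 0))
        = N / 2 + ((n : ℚ) - d - 1) * (N / 4) := by
      intro p hp
      rw [← Finset.add_sum_erase S _ hp]
      congr 1
      · have : ∀ σ : Equiv.Perm (Fin n),
            (if σ p.2 < σ p.1 then (1 : ℚ) else 0) * (if σ p.2 < σ p.1 then (1 : ℚ) else 0)
            = (if σ p.2 < σ p.1 then (1 : ℚ) else 0) := by
          intro σ; by_cases h : σ p.2 < σ p.1 <;> simp [h]
        rw [Finset.sum_congr rfl (fun σ _ => this σ)]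
        exact hsum1 p hp
      · have : ∀ q ∈ S.erase p, (∑ σ : Equiv.Perm (Fin n),
            (if σ p.2 < σ p.1 then (1 : ℚ) else 0) * (if σ q.2 < σ q.1 then (1 : ℚ) else 0))
            = N / 4 := by
          intro q hq
          exact hsum2 p hp q (Finset.mem_of_mem_erase hq)
            (fun h => (Finset.ne_of_mem_erase hq) h.symm)
        rw [Finset.sum_congr rfl this, Finset.sum_const, nsmul_eq_mul,
          Finset.card_erase_of_mem hp]
        congr 1
        rw [Nat.cast_sub hm1, hm]
        norm_num
    rw [Finset.sum_congr rfl inner, Finset.sum_const, nsmul_eq_mul, hm]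
    ring
  rw [hE1, hE2]
  field_simp
  ring
end

section
/- For 1 ≤ d ≤ n−1 with 2d ≤ n, the variance of the number of d-inversions of a uniformly random permutation in S_n equals d³/18 + d²/24 + (n/12 − 1/72)·d. -/
/-!
Write the indicator that `σ` inverts a pair `p = (i, j)`, `i < j`, as `(1 + ε_p σ) / 2` with
`ε_p σ = ±1`. Relabelling positions by a transposition shows `E ε_p = 0` and
`E[ε_p ε_q] = ([p = q] + ⟪∂p, ∂q⟫) / 3`, where `∂(i, j) = e_i - e_j`: for pairs sharing one
position this follows from an identity over three positions, for disjoint pairs by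
antisymmetry. Summing over a set `V` of pairs, `Var = (|V| + ‖∑_{p ∈ V} ∂p‖²) / 12`, and
`∑_{p ∈ V} ∂p` is the vector of out-degree minus in-degree. For the window
`V = {(i, j) | i < j ≤ i + d}` we have `|V| = nd - d(d+1)/2`, and when `2d ≤ n` the net degrees
are `d, d-1, …, 1, 0, …, 0, -1, …, -d`.
-/

open Finset Equiv

namespace PairInversions

section Signs

variable {α : Type*} [LinearOrder α]

def invSign (σ : Perm α) (a b : α) : ℚ := if σ b < σ a then 1 else -1

lemma invSign_mul (σ τ : Perm α) (a b : α) :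
    invSign (σ * τ) a b = invSign σ (τ a) (τ b) := rfl

lemma invSign_comm (σ : Perm α) {a b : α} (hab : a ≠ b) :
    invSign σ b a = -invSign σ a b := by
  have : σ a ≠ σ b := σ.injective.ne hab
  unfold invSign
  split_ifs <;> (try norm_num) <;> order

lemma invSign_mul_self (σ : Perm α) (a b : α) : invSign σ a b * invSign σ a b = 1 := by
  unfold invSign; split_ifs <;> norm_num

/-- Of three distinct positions, the middle value contributes `-1` and the two extremes `+1`. -/
lemma invSign_triangle (σ : Perm α) {a b c : α} (hab : a ≠ b) (hac : a ≠ c) (hbc : b ≠ c) :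
    invSign σ a b * invSign σ a c + invSign σ b a * invSign σ b c
      + invSign σ c b * invSign σ c a = 1 := by
  have : σ a ≠ σ b := σ.injective.ne hab
  have : σ a ≠ σ c := σ.injective.ne hac
  have : σ b ≠ σ c := σ.injective.ne hbc
  unfold invSign
  split_ifs <;> (try norm_num) <;> order

def incidence (p : α × α) (a : α) : ℚ :=
  (if p.1 = a then 1 else 0) - (if p.2 = a then 1 else 0)

def invCount (V : Finset (α × α)) (σ : Perm α) : ℕ := #{p ∈ V | σ p.2 < σ p.1}

def netDegree (V : Finset (α × α)) (a : α) : ℤ := #{p ∈ V | p.1 = a} - #{p ∈ V | p.2 = a}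

lemma sum_incidence (V : Finset (α × α)) (a : α) :
    ∑ p ∈ V, incidence p a = netDegree V a := by
  simp only [incidence, netDegree, sum_sub_distrib, sum_boole]
  push_cast
  rfl

lemma invCount_eq (V : Finset (α × α)) (σ : Perm α) :
    (invCount V σ : ℚ) = (#V + ∑ p ∈ V, invSign σ p.1 p.2) / 2 := by
  rw [invCount, natCast_card_filter, card_eq_sum_ones, Nat.cast_sum, ← sum_add_distrib, sum_div]
  refine sum_congr rfl fun p _ => ?_
  unfold invSign
  split_ifs <;> norm_num

variable [Fintype α]

lemma sum_invSign {a b : α} (hab : a ≠ b) : ∑ σ : Perm α, invSign σ a b = 0 := by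
  have h := Equiv.sum_comp (Equiv.mulRight (swap a b)) fun σ => invSign σ a b
  simp only [coe_mulRight, invSign_mul, swap_apply_left, swap_apply_right, invSign_comm _ hab,
    sum_neg_distrib] at h
  linarith

lemma sum_invSign_mul_invSign_of_disjoint {a b c e : α} (hab : a ≠ b) (hca : c ≠ a)
    (hcb : c ≠ b) (hea : e ≠ a) (heb : e ≠ b) :
    ∑ σ : Perm α, invSign σ a b * invSign σ c e = 0 := by
  have h := Equiv.sum_comp (Equiv.mulRight (swap a b)) fun σ => invSign σ a b * invSign σ c e
  simp only [coe_mulRight, invSign_mul, swap_apply_left, swap_apply_right,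
    swap_apply_of_ne_of_ne hca hcb, swap_apply_of_ne_of_ne hea heb, invSign_comm _ hab, neg_mul,
    sum_neg_distrib] at h
  linarith

lemma sum_invSign_mul_invSign_of_common {a b c : α} (hab : a ≠ b) (hac : a ≠ c)
    (hbc : b ≠ c) :
    ∑ σ : Perm α, invSign σ a b * invSign σ a c = Fintype.card (Perm α) / 3 := by
  have hb := Equiv.sum_comp (Equiv.mulRight (swap a b)) fun σ => invSign σ a b * invSign σ a c
  have hc := Equiv.sum_comp (Equiv.mulRight (swap a c)) fun σ => invSign σ a b * invSign σ a c
  simp only [coe_mulRight, invSign_mul, swap_apply_left, swap_apply_right,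
    swap_apply_of_ne_of_ne hac.symm hbc.symm,    swap_apply_of_ne_of_ne hab.symm hbc] at hb hc
  have hsum := Finset.sum_congr rfl fun σ (_ : σ ∈ univ) => invSign_triangle σ hab hac hbc
  simp only [sum_add_distrib, sum_const, card_univ, nsmul_eq_mul, mul_one] at hsum
  linarith

lemma sum_incidence_mul_incidence (p q : α × α) :
    ∑ a, incidence p a * incidence q a
      = (if p.1 = q.1 then 1 else 0) - (if p.1 = q.2 then 1 else 0)
      - (if p.2 = q.1 then 1 else 0) + (if p.2 = q.2 then 1 else 0) := by
  simp only [incidence, sub_mul, mul_sub, ite_mul, one_mul, zero_mul, sum_sub_distrib, sum_ite_eq,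
    mem_univ, if_true]
  simp only [eq_comm]
  ring

lemma sum_invSign_mul_invSign {p q : α × α} (hp : p.1 < p.2) (hq : q.1 < q.2) :
    ∑ σ : Perm α, invSign σ p.1 p.2 * invSign σ q.1 q.2
      = Fintype.card (Perm α) / 3
          * ((if p = q then 1 else 0) + ∑ a, incidence p a * incidence q a) := by
  obtain ⟨a, b⟩ := p
  obtain ⟨c, e⟩ := q
  dsimp only at hp hq ⊢
  rw [sum_incidence_mul_incidence]
  by_cases hpq : (a, b) = (c, e)
  · obtain ⟨rfl, rfl⟩ := Prod.mk.inj hpq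
    simp only [invSign_mul_self, sum_const, card_univ, nsmul_eq_mul, mul_one, if_true, hp.ne,
      hp.ne', if_false, sub_zero]
    ring
  rcases eq_or_ne a c with rfl | hac
  · have hbe : b ≠ e := fun h => hpq (by rw [h])
    rw [sum_invSign_mul_invSign_of_common hp.ne hq.ne hbe]
    simp [hpq, hp.ne', hq.ne, hbe]
  rcases eq_or_ne b e with rfl | hbe
  · have h σ : invSign σ a b * invSign σ c b = invSign σ b a * invSign σ b c := by
      rw [invSign_comm σ hp.ne, invSign_comm σ hq.ne, neg_mul_neg]
    rw [sum_congr rfl fun σ _ => h σ, sum_invSign_mul_invSign_of_common hp.ne' hq.ne' hac]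
    simp [hpq, hac, hp.ne, hq.ne']
  rcases eq_or_ne b c with rfl | hbc
  · have h σ : invSign σ a b * invSign σ b e = -(invSign σ b a * invSign σ b e) := by
      rw [invSign_comm σ hp.ne, neg_mul, neg_neg]
    rw [sum_congr rfl fun σ _ => h σ, sum_neg_distrib,
      sum_invSign_mul_invSign_of_common hp.ne' hq.ne (hp.trans hq).ne]
    simp [hpq, hac, hbe, (hp.trans hq).ne]
  rcases eq_or_ne a e with rfl | hae
  · have h σ : invSign σ a b * invSign σ c a = -(invSign σ a b * invSign σ a c) := by
      rw [invSign_comm σ hq.ne, mul_neg, neg_neg]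
    rw [sum_congr rfl fun σ _ => h σ, sum_neg_distrib,
      sum_invSign_mul_invSign_of_common hp.ne hq.ne' (hq.trans hp).ne']
    simp [hpq, hac, hbe, hbc]
  rw [sum_invSign_mul_invSign_of_disjoint hp.ne hac.symm hbc.symm hae.symm hbe.symm]
  simp [hpq, hac, hbe, hbc, hae]

lemma sum_sq_sum_invSign {V : Finset (α × α)} (hV : ∀ p ∈ V, p.1 < p.2) :
    ∑ σ : Perm α, (∑ p ∈ V, invSign σ p.1 p.2) ^ 2
      = Fintype.card (Perm α) / 3 * (#V + ∑ a, (netDegree V a : ℚ) ^ 2) := by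
  calc ∑ σ : Perm α, (∑ p ∈ V, invSign σ p.1 p.2) ^ 2
      = ∑ p ∈ V, ∑ q ∈ V, ∑ σ : Perm α, invSign σ p.1 p.2 * invSign σ q.1 q.2 := by
        simp_rw [sq, sum_mul_sum]
        rw [sum_comm]
        exact sum_congr rfl fun p _ => sum_comm
    _ = ∑ p ∈ V, ∑ q ∈ V, Fintype.card (Perm α) / 3
          * ((if p = q then 1 else 0) + ∑ a, incidence p a * incidence q a) :=
        sum_congr rfl fun p hp => sum_congr rfl fun q hq =>
          sum_invSign_mul_invSign (hV p hp) (hV q hq)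
    _ = Fintype.card (Perm α) / 3 * (#V + ∑ a, (∑ p ∈ V, incidence p a) ^ 2) := by
        simp_rw [← mul_sum]
        congr 1
        simp only [sum_add_distrib, sum_ite_eq, sq, sum_mul_sum]
        congr 1
        · simp
        · exact (sum_congr rfl fun p _ => sum_comm).trans sum_comm
    _ = _ := by simp_rw [sum_incidence]

theorem variance_invCount {V : Finset (α × α)} (hV : ∀ p ∈ V, p.1 < p.2) :
    (∑ σ : Perm α, (invCount V σ : ℚ) ^ 2) / Fintype.card (Perm α)
        - ((∑ σ : Perm α, (invCount V σ : ℚ)) / Fintype.card (Perm α)) ^ 2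
      = (#V + ∑ a, (netDegree V a : ℚ) ^ 2) / 12 := by
  set N : ℚ := (Fintype.card (Perm α) : ℚ)
  have hN : N ≠ 0 := by positivity
  have hS : ∑ σ : Perm α, ∑ p ∈ V, invSign σ p.1 p.2 = 0 := by
    rw [sum_comm]
    exact sum_eq_zero fun p hp => sum_invSign (hV p hp).ne
  have hcenter (f : Perm α → ℚ) (hf : ∑ σ, f σ = 0) :
      (∑ σ, ((#V + f σ) / 2) ^ 2) / N - ((∑ σ, (#V + f σ) / 2) / N) ^ 2
        = (∑ σ, f σ ^ 2) / (4 * N) := by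
    have h1 : ∑ σ, ((#V + f σ) / 2 : ℚ) ^ 2
        = (N * #V ^ 2 + 2 * #V * ∑ σ, f σ + ∑ σ, f σ ^ 2) / 4 := by
      simp only [div_pow, add_sq, ← sum_div, sum_add_distrib, ← mul_sum, sum_const, card_univ,
        nsmul_eq_mul]
      ring
    have h2 : ∑ σ, ((#V + f σ) / 2 : ℚ) = (N * #V + ∑ σ, f σ) / 2 := by
      rw [← sum_div, sum_add_distrib, sum_const, card_univ, nsmul_eq_mul]
    rw [h1, h2, hf]
    field_simp
    ring
  simp_rw [invCount_eq]
  rw [hcenter _ hS, sum_sq_sum_invSign hV]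
  field_simp
  ring

end Signs

section Window

variable {n : ℕ}

def window (n d : ℕ) : Finset (Fin n × Fin n) := {p | p.1 < p.2 ∧ (p.2 : ℕ) ≤ p.1 + d}

lemma card_filter_fin_val (P : ℕ → Prop) [DecidablePred P] :
    #{j : Fin n | P j} = #{k ∈ range n | P k} := by
  rw [← Nat.Iio_eq_range, ← Fin.map_valEmbedding_univ, filter_map, card_map]
  rfl

lemma card_window_filter_fst (d : ℕ) (a : Fin n) :
    #{p ∈ window n d | p.1 = a} = min d (n - 1 - a) := by
  calc #{p ∈ window n d | p.1 = a}
      = #{j : Fin n | (a : ℕ) < j ∧ (j : ℕ) ≤ a + d} := by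
        refine card_nbij' Prod.snd (fun j => (a, j)) ?_ ?_ ?_ ?_
        all_goals
          intro p
          simp only [window, coe_filter, mem_filter, mem_univ, true_and, Set.mem_ofPred_eq,
            Fin.lt_def]
          grind
    _ = #(Ioc (a : ℕ) (min (a + d) (n - 1))) := by
        rw [card_filter_fin_val fun k => (a : ℕ) < k ∧ k ≤ a + d]
        congr 1
        ext k
        simp only [mem_filter, mem_range, mem_Ioc]
        omega
    _ = min d (n - 1 - a) := by
        rw [Nat.card_Ioc]
        omega

lemma card_window_filter_snd (d : ℕ) (a : Fin n) :
    #{p ∈ window n d | p.2 = a} = min d a := by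
  calc #{p ∈ window n d | p.2 = a}
      = #{i : Fin n | (i : ℕ) < a ∧ (a : ℕ) ≤ i + d} := by
        refine card_nbij' Prod.fst (fun i => (i, a)) ?_ ?_ ?_ ?_
        all_goals
          intro p
          simp only [window, coe_filter, mem_filter, mem_univ, true_and, Set.mem_ofPred_eq,
            Fin.lt_def]
          grind
    _ = #(Ico ((a : ℕ) - d) a) := by
        rw [card_filter_fin_val fun k => k < (a : ℕ) ∧ (a : ℕ) ≤ k + d]
        congr 1
        ext k
        simp only [mem_filter, mem_range, mem_Ico]
        omega
    _ = min d a := by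
        rw [Nat.card_Ico]
        omega

lemma netDegree_window (d : ℕ) (a : Fin n) :
    netDegree (window n d) a = (min d (n - 1 - a) : ℕ) - (min d a : ℕ) := by
  rw [netDegree, card_window_filter_fst, card_window_filter_snd]

lemma two_mul_sum_range_cast (d : ℕ) : 2 * ∑ k ∈ range d, (k : ℤ) = d * (d - 1) := by
  induction d with
  | zero => simp
  | succ d ih =>
    rw [sum_range_succ, mul_add, ih]
    push_cast
    ring

lemma card_window {d : ℕ} (hd : d ≤ n) :
    (#(window n d) : ℤ) * 2 = 2 * n * d - d * (d + 1) := by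
  rw [card_eq_sum_card_fiberwise (f := Prod.fst) (t := univ) fun _ _ => mem_coe.2 (mem_univ _)]
  simp_rw [card_window_filter_fst]
  rw [Fin.sum_univ_eq_sum_range (fun k => min d (n - 1 - k)) n]
  obtain ⟨m, rfl⟩ : ∃ m, n = m + d := ⟨n - d, by omega⟩
  rw [sum_range_add]
  have hfar : ∑ k ∈ range m, min d (m + d - 1 - k) = ∑ k ∈ range m, d :=
    sum_congr rfl fun k hk => by rw [mem_range] at hk; omega
  have hnear : ∑ k ∈ range d, min d (m + d - 1 - (m + k)) = ∑ k ∈ range d, (d - 1 - k) :=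
    sum_congr rfl fun k hk => by rw [mem_range] at hk; omega
  rw [hfar, hnear, sum_range_reflect (fun k => k) d, sum_const, card_range, smul_eq_mul]
  push_cast
  linear_combination two_mul_sum_range_cast d

lemma six_mul_sum_range_succ_sq (d : ℕ) :
    6 * ∑ k ∈ range d, ((k : ℤ) + 1) ^ 2 = (d * (d + 1) * (2 * d + 1) : ℤ) := by
  induction d with
  | zero => simp
  | succ d ih =>
    rw [sum_range_succ, mul_add, ih]
    push_cast
    ring

lemma sum_netDegree_window_sq {d : ℕ} (hd : 2 * d ≤ n) :
    3 * ∑ a, netDegree (window n d) a ^ 2 = d * (d + 1) * (2 * d + 1) := by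
  simp_rw [netDegree_window]
  rw [Fin.sum_univ_eq_sum_range
    (fun k => ((min d (n - 1 - k) : ℕ) - (min d k : ℕ) : ℤ) ^ 2) n]
  obtain ⟨m, rfl⟩ : ∃ m, n = d + m + d := ⟨n - 2 * d, by omega⟩
  rw [sum_range_add, sum_range_add]
  have hleft : ∑ k ∈ range d, ((min d (d + m + d - 1 - k) : ℕ) - (min d k : ℕ) : ℤ) ^ 2
      = ∑ k ∈ range d, (((d - 1 - k : ℕ) : ℤ) + 1) ^ 2 :=
    sum_congr rfl fun k hk => by rw [mem_range] at hk; congr 1; omega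
  have hmid : ∑ k ∈ range m,
      ((min d (d + m + d - 1 - (d + k)) : ℕ) - (min d (d + k) : ℕ) : ℤ) ^ 2 = 0 :=
    sum_eq_zero fun k hk => by rw [mem_range] at hk; simp only [pow_eq_zero_iff two_ne_zero]; omega
  have hright : ∑ k ∈ range d,
      ((min d (d + m + d - 1 - (d + m + k)) : ℕ) - (min d (d + m + k) : ℕ) : ℤ) ^ 2
      = ∑ k ∈ range d, ((k : ℤ) + 1) ^ 2 :=
    sum_congr rfl fun k hk => by rw [mem_range] at hk; rw [← neg_sq]; congr 1; omega
  rw [hleft, hmid, hright, sum_range_reflect (fun k => ((k : ℤ) + 1) ^ 2) d]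
  linear_combination six_mul_sum_range_succ_sq d

end Window

end PairInversions

theorem var_d_inversions_small_d_general (n d : ℕ) (h2 : 2 * d ≤ n) :
    let N : ℚ := Fintype.card (Equiv.Perm (Fin n))
    let X : Equiv.Perm (Fin n) → ℚ := fun σ =>
      ((Finset.univ.filter fun p : Fin n × Fin n =>
        p.1 < p.2 ∧ (p.2 : ℕ) ≤ (p.1 : ℕ) + d ∧ σ p.2 < σ p.1).card : ℚ)
    (∑ σ : Equiv.Perm (Fin n), X σ ^ 2) / N - ((∑ σ : Equiv.Perm (Fin n), X σ) / N) ^ 2 =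
      (d : ℚ) ^ 3 / 18 + (d : ℚ) ^ 2 / 24 + ((n : ℚ) / 12 - 1 / 72) * d := by
  intro N X
  have hX : X = fun σ => (PairInversions.invCount (PairInversions.window n d) σ : ℚ) := by
    funext σ
    simp only [X, PairInversions.invCount, PairInversions.window, filter_filter, and_assoc]
  rw [hX, PairInversions.variance_invCount fun p hp => (mem_filter.1 hp).2.1]
  have hV : (#(PairInversions.window n d) : ℚ) * 2 = 2 * n * d - d * (d + 1) := by
    exact_mod_cast PairInversions.card_window (n := n) (d := d) (by omega)
  have hD : 3 * ∑ a, (PairInversions.netDegree (PairInversions.window n d) a : ℚ) ^ 2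
      = d * (d + 1) * (2 * d + 1) := by
    exact_mod_cast PairInversions.sum_netDegree_window_sq h2
  linear_combination hV / 24 + hD / 36

/-- For `1 ≤ d ≤ n-1` with `2d ≤ n`, the variance of the number of `d`-inversions
of a uniformly random permutation in `S_n` equals `d³/18 + d²/24 + (n/12 - 1/72)d`. -/
theorem var_d_inversions_small_d (n d : ℕ) (hd : 1 ≤ d) (hdn : d ≤ n - 1) (h2 : 2 * d ≤ n) :
    let N : ℚ := Fintype.card (Equiv.Perm (Fin n))
    let X : Equiv.Perm (Fin n) → ℚ := fun σ =>
      ((Finset.univ.filter fun p : Fin n × Fin n =>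
        p.1 < p.2 ∧ (p.2 : ℕ) ≤ (p.1 : ℕ) + d ∧ σ p.2 < σ p.1).card : ℚ)
    (∑ σ : Equiv.Perm (Fin n), X σ ^ 2) / N - ((∑ σ : Equiv.Perm (Fin n), X σ) / N) ^ 2 =
      (d : ℚ) ^ 3 / 18 + (d : ℚ) ^ 2 / 24 + ((n : ℚ) / 12 - 1 / 72) * d :=
  var_d_inversions_small_d_general n d h2
end

section
/- For 1 ≤ d ≤ n−1 with 2d ≥ n, the variance of the number of d-inversions of a uniformly random permutation in S_n equals −d³/6 + (n/3 − 7/24)d² + (−n²/6 + 5n/12 − 1/8)d + (n³/36 − n²/12 + n/18). -/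
/-!
Write `c_{ab}(σ) = ±1/2` according as `σ` does or does not invert the positions `a, b`. The number
of inversions of `σ` along a set `E` of pairs is then `#E/2 + ∑_{p ∈ E} c_p(σ)`, so its variance is
the mean of `(∑_{p ∈ E} c_p)²`. Relabelling positions by a transposition preserves the uniform
measure; this shows that `c_{ab}` has mean `0`, that `c_{ab} c_{ce}` has mean `0` for distinct
`a, b, c, e`, and, with the pointwise identity
`c_{ab} c_{ac} + c_{ba} c_{bc} + c_{cb} c_{ca} = 1/4`, that `c_{ab} c_{ac}` has mean `1/12`.
Hence, if `E` contains no pair together with its reverse, the variance is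
`(#E + ∑_x (outdeg x - indeg x)²) / 12`. For the `d`-inversions with `2d ≥ n` the out- and
in-degree of `x` are `min d (n-1-x)` and `min x d`, and the sum splits into three quadratic pieces.
-/

open Finset Equiv

lemma sum_add_const_sq_div_sub_sq {ι : Type*} [Fintype ι] (Y : ι → ℚ) (m : ℚ)
    (hY : ∑ i, Y i = 0) :
    (∑ i, (Y i + m) ^ 2) / Fintype.card ι - ((∑ i, (Y i + m)) / Fintype.card ι) ^ 2 =
      (∑ i, Y i ^ 2) / Fintype.card ι := by
  simp only [add_sq, sum_add_distrib, ← sum_mul, ← mul_sum, hY, sum_const, card_univ, nsmul_eq_mul]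
  rcases eq_or_ne (Fintype.card ι : ℚ) 0 with h | h
  · simp [h]
  · field_simp
    ring

lemma fst_ne_snd_of_swap_notMem {β : Type*} {E : Finset (β × β)} (hE : ∀ p ∈ E, p.swap ∉ E)
    {p : β × β} (hp : p ∈ E) : p.1 ≠ p.2 :=
  fun h => hE p hp (by rwa [show p.swap = p from Prod.ext h.symm h])

section CenteredInversion

variable {α : Type*} [LinearOrder α]

def centeredInv (σ : Perm α) (a b : α) : ℚ := if σ b < σ a then 1 / 2 else -1 / 2

lemma centeredInv_swap (σ : Perm α) {a b : α} (hab : a ≠ b) :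
    centeredInv σ b a = -centeredInv σ a b := by
  have := σ.injective.ne hab
  unfold centeredInv
  split_ifs <;> first | order | norm_num

lemma centeredInv_mul_self (σ : Perm α) (a b : α) :
    centeredInv σ a b * centeredInv σ a b = 1 / 4 := by
  unfold centeredInv
  split_ifs <;> norm_num

lemma centeredInv_triple (σ : Perm α) {a b c : α} (hab : a ≠ b) (hac : a ≠ c) (hbc : b ≠ c) :
    centeredInv σ a b * centeredInv σ a c + centeredInv σ b a * centeredInv σ b c +
      centeredInv σ c b * centeredInv σ c a = 1 / 4 := by
  rcases (σ.injective.ne hab).lt_or_gt with h₁ | h₁ <;>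
  rcases (σ.injective.ne hac).lt_or_gt with h₂ | h₂ <;>
  rcases (σ.injective.ne hbc).lt_or_gt with h₃ | h₃ <;>
  simp only [centeredInv, h₁, h₂, h₃, h₁.not_gt, h₂.not_gt, h₃.not_gt, if_true, if_false] <;>
  first | order | norm_num

def incidence (p : α × α) (x : α) : ℚ := (if p.1 = x then 1 else 0) - (if p.2 = x then 1 else 0)

lemma sum_incidence (E : Finset (α × α)) (x : α) :
    ∑ p ∈ E, incidence p x = (#{p ∈ E | p.1 = x} : ℚ) - #{p ∈ E | p.2 = x} := by
  simp only [incidence, sum_sub_distrib, sum_boole]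

variable [Fintype α]

lemma sum_incidence_mul_incidence (p q : α × α) :
    ∑ x, incidence p x * incidence q x =
      (if p.1 = q.1 then 1 else 0) - (if p.1 = q.2 then 1 else 0) -
        (if p.2 = q.1 then 1 else 0) + (if p.2 = q.2 then 1 else 0) := by
  simp only [incidence, sub_mul, mul_sub, ite_mul, one_mul, zero_mul, sum_sub_distrib]
  simp only [eq_comm, sum_ite_eq', mem_univ, ↓reduceIte]
  ring

lemma sum_centeredInv_comp (π : Perm α) (a b : α) :
    ∑ σ : Perm α, centeredInv σ (π a) (π b) = ∑ σ : Perm α, centeredInv σ a b :=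
  Fintype.sum_equiv (Equiv.mulRight π) _ _ fun _ => rfl

lemma sum_centeredInv_mul_comp (π : Perm α) (a b c e : α) :
    ∑ σ : Perm α, centeredInv σ (π a) (π b) * centeredInv σ (π c) (π e) =
      ∑ σ : Perm α, centeredInv σ a b * centeredInv σ c e :=
  Fintype.sum_equiv (Equiv.mulRight π) _ _ fun _ => rfl

lemma sum_centeredInv_eq_zero {a b : α} (hab : a ≠ b) : ∑ σ : Perm α, centeredInv σ a b = 0 := by
  have h := sum_centeredInv_comp (swap a b) a b
  rw [swap_apply_left, swap_apply_right] at h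
  simp only [centeredInv_swap _ hab, sum_neg_distrib] at h
  linarith

lemma sum_centeredInv_mul_centeredInv_of_disjoint {a b c e : α} (hab : a ≠ b) (hac : a ≠ c)
    (hae : a ≠ e) (hbc : b ≠ c) (hbe : b ≠ e) :
    ∑ σ : Perm α, centeredInv σ a b * centeredInv σ c e = 0 := by
  have h := sum_centeredInv_mul_comp (swap a b) a b c e
  rw [swap_apply_left, swap_apply_right, swap_apply_of_ne_of_ne hac.symm hbc.symm,
    swap_apply_of_ne_of_ne hae.symm hbe.symm] at h
  simp only [centeredInv_swap _ hab, neg_mul, sum_neg_distrib] at h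
  linarith

lemma sum_centeredInv_mul_centeredInv_same_left {a b c : α} (hab : a ≠ b) (hac : a ≠ c)
    (hbc : b ≠ c) :
    ∑ σ : Perm α, centeredInv σ a b * centeredInv σ a c = Fintype.card (Perm α) / 12 := by
  have h₁ := sum_centeredInv_mul_comp (swap a b) b a b c
  rw [swap_apply_left, swap_apply_right, swap_apply_of_ne_of_ne hac.symm hbc.symm] at h₁
  have h₂ := sum_centeredInv_mul_comp (swap a c) c b c a
  rw [swap_apply_left, swap_apply_right, swap_apply_of_ne_of_ne hab.symm hbc] at h₂
  have h₃ : ∑ σ : Perm α, (centeredInv σ a b * centeredInv σ a c +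
      centeredInv σ b a * centeredInv σ b c + centeredInv σ c b * centeredInv σ c a) =
      Fintype.card (Perm α) / 4 := by
    simp [centeredInv_triple _ hab hac hbc, div_eq_mul_inv]
  rw [sum_add_distrib, sum_add_distrib] at h₃
  linarith

-- `1/4` if `p = q`, `±1/12` if `p` and `q` share one position (`+` when it plays the same role
-- in both), `0` otherwise.
lemma sum_centeredInv_mul_centeredInv {p q : α × α} (hp : p.1 ≠ p.2) (hq : q.1 ≠ q.2)
    (hpq : p.swap ≠ q) :
    ∑ σ : Perm α, centeredInv σ p.1 p.2 * centeredInv σ q.1 q.2 =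
      Fintype.card (Perm α) / 12 *
        ((if p = q then 1 else 0) + ∑ x, incidence p x * incidence q x) := by
  obtain ⟨a, b⟩ := p
  obtain ⟨c, e⟩ := q
  dsimp only at hp hq ⊢
  simp only [Prod.swap_prod_mk, ne_eq, Prod.mk.injEq, not_and] at hpq
  rw [sum_incidence_mul_incidence]
  rcases eq_or_ne a c with rfl | hac
  · rcases eq_or_ne b e with rfl | hbe
    · simp [centeredInv_mul_self, hp, Ne.symm hp]
      ring
    · rw [sum_centeredInv_mul_centeredInv_same_left hp hq hbe]
      simp [hbe, hq, Ne.symm hp]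
  · rcases eq_or_ne b e with rfl | hbe
    · simp only [centeredInv_swap _ hp.symm, centeredInv_swap _ hq.symm, neg_mul_neg]
      rw [sum_centeredInv_mul_centeredInv_same_left hp.symm hq.symm hac]
      simp [hac, hp, hq.symm]
    · rcases eq_or_ne b c with rfl | hbc
      · simp only [centeredInv_swap _ hp.symm, neg_mul, sum_neg_distrib]
        rw [sum_centeredInv_mul_centeredInv_same_left hp.symm hq (hpq rfl)]
        simp [hp, hbe, hpq rfl]
      · rcases eq_or_ne a e with rfl | hae
        · simp only [centeredInv_swap _ hac, mul_neg, sum_neg_distrib]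
          rw [sum_centeredInv_mul_centeredInv_same_left hp hac hbc]
          simp [hac, hp.symm, hbc]
        · rw [sum_centeredInv_mul_centeredInv_of_disjoint hp hac hae hbc hbe]
          simp [hac, hae, hbc, hbe]

lemma sum_sq_sum_centeredInv {E : Finset (α × α)} (hE : ∀ p ∈ E, p.swap ∉ E) :
    ∑ σ : Perm α, (∑ p ∈ E, centeredInv σ p.1 p.2) ^ 2 =
      Fintype.card (Perm α) / 12 * (#E + ∑ x, (∑ p ∈ E, incidence p x) ^ 2) := by
  have hdiag : ∑ p ∈ E, ∑ q ∈ E, (if p = q then (1 : ℚ) else 0) = #E := by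
    simp [sum_ite_eq]
  have hinc : ∑ p ∈ E, ∑ q ∈ E, ∑ x, incidence p x * incidence q x =
      ∑ x, (∑ p ∈ E, incidence p x) ^ 2 := by
    simp only [sq, sum_mul_sum]
    exact (sum_comm.trans (sum_congr rfl fun _ _ => sum_comm)).symm
  calc ∑ σ : Perm α, (∑ p ∈ E, centeredInv σ p.1 p.2) ^ 2
      = ∑ p ∈ E, ∑ q ∈ E, ∑ σ : Perm α, centeredInv σ p.1 p.2 * centeredInv σ q.1 q.2 := by
        simp only [sq, sum_mul_sum]
        rw [sum_comm]
        exact sum_congr rfl fun _ _ => sum_comm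
    _ = ∑ p ∈ E, ∑ q ∈ E, Fintype.card (Perm α) / 12 *
          ((if p = q then 1 else 0) + ∑ x, incidence p x * incidence q x) :=
        sum_congr rfl fun p hp => sum_congr rfl fun q hq =>
          sum_centeredInv_mul_centeredInv (fst_ne_snd_of_swap_notMem hE hp)
            (fst_ne_snd_of_swap_notMem hE hq) fun h => hE p hp (h ▸ hq)
    _ = _ := by
        simp only [← mul_sum, sum_add_distrib, hdiag, hinc]

theorem variance_card_inversions (E : Finset (α × α)) (hE : ∀ p ∈ E, p.swap ∉ E) :
    let N : ℚ := Fintype.card (Perm α)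
    let X : Perm α → ℚ := fun σ => #{p ∈ E | σ p.2 < σ p.1}
    (∑ σ, X σ ^ 2) / N - ((∑ σ, X σ) / N) ^ 2 =
      (#E + ∑ x, ((#{p ∈ E | p.1 = x} : ℚ) - #{p ∈ E | p.2 = x}) ^ 2) / 12 := by
  intro N X
  have hX : ∀ σ, X σ = ∑ p ∈ E, centeredInv σ p.1 p.2 + #E / 2 := by
    intro σ
    simp only [X, card_filter, Nat.cast_sum, centeredInv]
    rw [card_eq_sum_ones, Nat.cast_sum, sum_div, ← sum_add_distrib]
    refine sum_congr rfl fun p _ => ?_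
    split_ifs <;> norm_num
  have hmean : ∑ σ : Perm α, ∑ p ∈ E, centeredInv σ p.1 p.2 = 0 := by
    rw [sum_comm]
    exact sum_eq_zero fun p hp => sum_centeredInv_eq_zero (fst_ne_snd_of_swap_notMem hE hp)
  have hN : N ≠ 0 := Nat.cast_ne_zero.mpr Fintype.card_ne_zero
  simp only [hX]
  rw [sum_add_const_sq_div_sub_sq _ _ hmean, sum_sq_sum_centeredInv hE]
  simp only [sum_incidence]
  field_simp

end CenteredInversion

def windowPairs (n d : ℕ) : Finset (Fin n × Fin n) := {p | p.1 < p.2 ∧ (p.2 : ℕ) ≤ p.1 + d}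

lemma swap_notMem_windowPairs {n d : ℕ} {p : Fin n × Fin n} (hp : p ∈ windowPairs n d) :
    p.swap ∉ windowPairs n d := by
  simp only [windowPairs, mem_filter, mem_univ, true_and, Prod.fst_swap, Prod.snd_swap] at hp ⊢
  exact fun h => lt_asymm hp.1 h.1

lemma card_filter_windowPairs_fst_eq {n d : ℕ} (x : Fin n) :
    #{p ∈ windowPairs n d | p.1 = x} = min d (n - 1 - x) := by
  have : #{p ∈ windowPairs n d | p.1 = x} = #(Ioc (x : ℕ) (min (x + d) (n - 1))) := by
    refine card_nbij (fun p => (p.2 : ℕ)) ?_ ?_ ?_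
    · intro p hp
      simp only [windowPairs, coe_filter, mem_filter, mem_univ, true_and, Set.mem_ofPred_eq] at hp
      obtain ⟨⟨hlt, hle⟩, rfl⟩ := hp
      simp only [coe_Ioc, Set.mem_Ioc, le_min_iff]
      omega
    · intro p hp q hq h
      simp only [windowPairs, coe_filter, mem_filter, mem_univ, true_and, Set.mem_ofPred_eq]
        at hp hq
      exact Prod.ext (hp.2.trans hq.2.symm) (Fin.ext h)
    · intro y hy
      simp only [coe_Ioc, Set.mem_Ioc, le_min_iff] at hy
      refine ⟨(x, ⟨y, by omega⟩), ?_, rfl⟩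
      simp only [windowPairs, coe_filter, mem_filter, mem_univ, true_and, Set.mem_ofPred_eq,
        Fin.lt_def, and_true]
      omega
  rw [this, Nat.card_Ioc]
  omega

lemma card_filter_windowPairs_snd_eq {n d : ℕ} (x : Fin n) :
    #{p ∈ windowPairs n d | p.2 = x} = min (x : ℕ) d := by
  have : #{p ∈ windowPairs n d | p.2 = x} = #(Ico ((x : ℕ) - d) x) := by
    refine card_nbij (fun p => (p.1 : ℕ)) ?_ ?_ ?_
    · intro p hp
      simp only [windowPairs, coe_filter, mem_filter, mem_univ, true_and, Set.mem_ofPred_eq] at hp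
      obtain ⟨⟨hlt, hle⟩, rfl⟩ := hp
      simp only [coe_Ico, Set.mem_Ico]
      omega
    · intro p hp q hq h
      simp only [windowPairs, coe_filter, mem_filter, mem_univ, true_and, Set.mem_ofPred_eq]
        at hp hq
      exact Prod.ext (Fin.ext h) (hp.2.trans hq.2.symm)
    · intro y hy
      simp only [coe_Ico, Set.mem_Ico] at hy
      refine ⟨(⟨y, by omega⟩, x), ?_, rfl⟩
      simp only [windowPairs, coe_filter, mem_filter, mem_univ, true_and, Set.mem_ofPred_eq,
        Fin.lt_def, and_true]
      omega
  rw [this, Nat.card_Ico]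
  omega

lemma card_windowPairs_eq_sum (n d : ℕ) :
    #(windowPairs n d) = ∑ x : Fin n, min d (n - 1 - x) := by
  rw [card_eq_sum_card_fiberwise (f := Prod.fst) fun _ _ => mem_univ _]
  exact sum_congr rfl fun x _ => card_filter_windowPairs_fst_eq x

lemma sum_Ico_quadratic {a b : ℕ} (hab : a ≤ b) (u v w : ℚ) :
    ∑ x ∈ Ico a b, (u + v * x + w * x ^ 2) =
      (u * b + v * b * (b - 1) / 2 + w * b * (b - 1) * (2 * b - 1) / 6) -
        (u * a + v * a * (a - 1) / 2 + w * a * (a - 1) * (2 * a - 1) / 6) := by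
  induction b, hab using Nat.le_induction with
  | base => simp
  | succ b hab ih =>
    rw [sum_Ico_succ_top hab, ih]
    push_cast
    ring

lemma sum_range_window {n d : ℕ} (hd : 1 ≤ d) (hdn : d ≤ n - 1) (h2 : n ≤ 2 * d) :
    ∑ x ∈ range n, (((min d (n - 1 - x) : ℕ) : ℚ) +
        (((min d (n - 1 - x) : ℕ) : ℚ) - ((min x d : ℕ) : ℚ)) ^ 2) =
      12 * (-(d : ℚ) ^ 3 / 6 + ((n : ℚ) / 3 - 7 / 24) * (d : ℚ) ^ 2 +
        (-(n : ℚ) ^ 2 / 6 + 5 * (n : ℚ) / 12 - 1 / 8) * d +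
        ((n : ℚ) ^ 3 / 36 - (n : ℚ) ^ 2 / 12 + (n : ℚ) / 18)) := by
  rw [range_eq_Ico, ← sum_Ico_consecutive _ (Nat.zero_le (d + 1)) (by omega : d + 1 ≤ n),
    ← sum_Ico_consecutive _ (Nat.zero_le (n - d)) (by omega : n - d ≤ d + 1)]
  have h₁ : ∀ x ∈ Ico 0 (n - d), (((min d (n - 1 - x) : ℕ) : ℚ) +
      (((min d (n - 1 - x) : ℕ) : ℚ) - ((min x d : ℕ) : ℚ)) ^ 2) =
      (d + d ^ 2) + (-2 * d) * x + 1 * x ^ 2 := by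
    intro x hx
    rw [mem_Ico] at hx
    rw [min_eq_left (by omega), min_eq_left (by omega)]
    ring
  have h₂ : ∀ x ∈ Ico (n - d) (d + 1), (((min d (n - 1 - x) : ℕ) : ℚ) +
      (((min d (n - 1 - x) : ℕ) : ℚ) - ((min x d : ℕ) : ℚ)) ^ 2) =
      ((n - 1) + (n - 1) ^ 2) + (-1 - 4 * (n - 1)) * x + 4 * x ^ 2 := by
    intro x hx
    rw [mem_Ico] at hx
    rw [min_eq_right (by omega), min_eq_left (by omega), Nat.sub_sub,
      Nat.cast_sub (by omega : 1 + x ≤ n)]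
    push_cast
    ring
  have h₃ : ∀ x ∈ Ico (d + 1) n, (((min d (n - 1 - x) : ℕ) : ℚ) +
      (((min d (n - 1 - x) : ℕ) : ℚ) - ((min x d : ℕ) : ℚ)) ^ 2) =
      ((n - 1) + (n - 1 - d) ^ 2) + (-1 - 2 * (n - 1 - d)) * x + 1 * x ^ 2 := by
    intro x hx
    rw [mem_Ico] at hx
    rw [min_eq_right (by omega), min_eq_right (by omega), Nat.sub_sub,
      Nat.cast_sub (by omega : 1 + x ≤ n)]
    push_cast
    ring
  rw [sum_congr rfl h₁, sum_congr rfl h₂, sum_congr rfl h₃, sum_Ico_quadratic (Nat.zero_le _),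
    sum_Ico_quadratic (by omega), sum_Ico_quadratic (by omega), Nat.cast_sub (by omega : d ≤ n)]
  push_cast
  ring

/-- For `1 ≤ d ≤ n-1` with `2d ≥ n`, the variance of the number of `d`-inversions
of a uniformly random permutation in `S_n` equals
`-d³/6 + (n/3 - 7/24)d² + (-n²/6 + 5n/12 - 1/8)d + (n³/36 - n²/12 + n/18)`. -/
theorem var_d_inversions_large_d (n d : ℕ) (hd : 1 ≤ d) (hdn : d ≤ n - 1) (h2 : n ≤ 2 * d) :
    let N : ℚ := Fintype.card (Equiv.Perm (Fin n))
    let X : Equiv.Perm (Fin n) → ℚ := fun σ =>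
      ((Finset.univ.filter fun p : Fin n × Fin n =>
        p.1 < p.2 ∧ (p.2 : ℕ) ≤ (p.1 : ℕ) + d ∧ σ p.2 < σ p.1).card : ℚ)
    (∑ σ : Equiv.Perm (Fin n), X σ ^ 2) / N - ((∑ σ : Equiv.Perm (Fin n), X σ) / N) ^ 2 =
      -(d : ℚ) ^ 3 / 6 + ((n : ℚ) / 3 - 7 / 24) * (d : ℚ) ^ 2 +
        (-(n : ℚ) ^ 2 / 6 + 5 * (n : ℚ) / 12 - 1 / 8) * d +
        ((n : ℚ) ^ 3 / 36 - (n : ℚ) ^ 2 / 12 + (n : ℚ) / 18) := by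
  intro N X
  have hX : ∀ σ, X σ = #{p ∈ windowPairs n d | σ p.2 < σ p.1} := by
    intro σ
    simp only [X, windowPairs, filter_filter, and_assoc]
  simp only [hX]
  refine (variance_card_inversions _ fun _ => swap_notMem_windowPairs).trans ?_
  simp only [card_windowPairs_eq_sum, card_filter_windowPairs_fst_eq,
    card_filter_windowPairs_snd_eq, Nat.cast_sum, ← sum_add_distrib]
  rw [Fin.sum_univ_eq_sum_range (fun x => ((min d (n - 1 - x) : ℕ) : ℚ) +
    (((min d (n - 1 - x) : ℕ) : ℚ) - ((min x d : ℕ) : ℚ)) ^ 2), sum_range_window hd hdn h2]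
  ring
end

section
/- Let W be a finite Weyl group, Γ a subset of the simple roots with parabolic subgroup W_Γ, and β ∈ Φ⁺_Γ. Then |{w ∈ W : w(β) ∈ Φ⁻}| / |W| = |{w ∈ W_Γ : w(β) ∈ Φ⁻}| / |W_Γ|. -/
open scoped Classical

noncomputable section

/-- A finite, reduced, crystallographic root system spanning `ℝⁿ`,
together with a choice of positive system. -/
structure CrystRootSystem (n : ℕ) where
  /-- the finite set of roots -/
  roots : Finset (EuclideanSpace ℝ (Fin n))
  nonzero : ∀ β ∈ roots, β ≠ 0
  neg_mem : ∀ β ∈ roots, -β ∈ roots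
  spanning : Submodule.span ℝ (roots : Set (EuclideanSpace ℝ (Fin n))) = ⊤
  reflect_mem : ∀ α ∈ roots, ∀ β ∈ roots,
    β - (2 * (inner ℝ α β : ℝ) / (inner ℝ α α : ℝ)) • α ∈ roots
  cryst : ∀ α ∈ roots, ∀ β ∈ roots, ∃ k : ℤ,
    2 * (inner ℝ α β : ℝ) / (inner ℝ α α : ℝ) = (k : ℝ)
  reduced : ∀ α ∈ roots, ∀ c : ℝ, c • α ∈ roots → c = 1 ∨ c = -1
  /-- the positive roots -/
  pos : Finset (EuclideanSpace ℝ (Fin n))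
  pos_def : ∃ f : EuclideanSpace ℝ (Fin n) →ₗ[ℝ] ℝ, (∀ β ∈ roots, f β ≠ 0) ∧
    ∀ β, β ∈ pos ↔ β ∈ roots ∧ 0 < f β

variable {n : ℕ}

/-- `w` is the orthogonal reflection in the root `β`. -/
def IsReflectionIn (β : EuclideanSpace ℝ (Fin n))
    (w : EuclideanSpace ℝ (Fin n) ≃ₗᵢ[ℝ] EuclideanSpace ℝ (Fin n)) : Prop :=
  ∀ v, w v = v - (2 * (inner ℝ β v : ℝ) / (inner ℝ β β : ℝ)) • β

/-- The Weyl group, generated by the reflections in the roots. -/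
def CrystRootSystem.weyl (R : CrystRootSystem n) :
    Subgroup (EuclideanSpace ℝ (Fin n) ≃ₗᵢ[ℝ] EuclideanSpace ℝ (Fin n)) :=
  Subgroup.closure {w | ∃ β ∈ R.roots, IsReflectionIn β w}

/-- The simple roots: indecomposable positive roots. -/
def CrystRootSystem.simples (R : CrystRootSystem n) : Finset (EuclideanSpace ℝ (Fin n)) :=
  R.pos.filter fun β => ¬ ∃ γ ∈ R.pos, ∃ δ ∈ R.pos, β = γ + δ

/-- The parabolic subgroup generated by the reflections in the roots of `Γ`. -/
def parabolicSubgroup (Γ : Finset (EuclideanSpace ℝ (Fin n))) :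
    Subgroup (EuclideanSpace ℝ (Fin n) ≃ₗᵢ[ℝ] EuclideanSpace ℝ (Fin n)) :=
  Subgroup.closure {w | ∃ α ∈ Γ, IsReflectionIn α w}

/-! Right multiplication by the reflection `s_β` is an involution of any finite group `H` of
isometries containing it, and it exchanges the elements sending `β` to positive roots with those
sending `β` to negative roots; so both proportions are `1/2` once `s_β ∈ W_Γ`. That membership is
proved by induction on the value at `β` of a linear form defining the positive roots: in the basis
of simple roots `β` has nonnegative coordinates, supported on `Γ`, so some `α ∈ Γ` has
`⟪α, β⟫ > 0`; then `s_α β` is a lower positive root in `span Γ`, and `s_β = s_α s_{s_α β} s_α`. -/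

open Finset
open scoped RealInnerProductSpace

section InnerProductSpace

variable {F : Type*} [NormedAddCommGroup F] [InnerProductSpace ℝ F]

theorem coeff_nonpos_of_sum_smul_eq_zero {ι : Type*} {v : ι → F} (f : F →ₗ[ℝ] ℝ)
    (hf : ∀ i, 0 < f (v i)) (hv : Pairwise fun i j => ⟪v i, v j⟫ ≤ 0)
    {s : Finset ι} {g : ι → ℝ} (hg : ∑ i ∈ s, g i • v i = 0) : ∀ i ∈ s, g i ≤ 0 := by
  intro i₀ hi₀
  by_contra! hpos
  set u := ∑ i ∈ s.filter (fun i => 0 < g i), g i • v i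
  set u' := ∑ j ∈ s.filter (fun j => ¬ 0 < g j), g j • v j
  -- `u = -u'` with `⟪u, u'⟫ ≥ 0` forces `u = 0`, whereas `f u > 0` as soon as some `g i > 0`
  have hu : u = -u' := by
    rw [eq_neg_iff_add_eq_zero, sum_filter_add_sum_filter_not]
    exact hg
  have hcross : 0 ≤ ⟪u, u'⟫ := by
    simp only [u, u', sum_inner]
    refine sum_nonneg fun i hi => ?_
    rw [real_inner_smul_left, inner_sum]
    refine mul_nonneg (mem_filter.1 hi).2.le (sum_nonneg fun j hj => ?_)
    rw [real_inner_smul_right]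
    rw [mem_filter] at hi hj
    exact mul_nonneg_of_nonpos_of_nonpos (not_lt.1 hj.2) (hv fun h => hj.2 (h ▸ hi.2))
  have hu0 : u = 0 := by
    rw [← real_inner_self_nonpos]
    nth_rewrite 2 [hu]
    rw [inner_neg_right]
    linarith
  have hfu : 0 < f u := by
    simp only [u, map_sum, map_smul, smul_eq_mul]
    exact sum_pos (fun i hi => mul_pos (mem_filter.1 hi).2 (hf i)) ⟨i₀, mem_filter.2 ⟨hi₀, hpos⟩⟩
  simp [hu0] at hfu

theorem linearIndependent_of_pairwise_inner_nonpos {ι : Type*} {v : ι → F} (f : F →ₗ[ℝ] ℝ)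
    (hf : ∀ i, 0 < f (v i)) (hv : Pairwise fun i j => ⟪v i, v j⟫ ≤ 0) :
    LinearIndependent ℝ v := by
  refine linearIndependent_iff'.2 fun s g hg i hi => le_antisymm
    (coeff_nonpos_of_sum_smul_eq_zero f hf hv hg i hi) ?_
  have hg' : ∑ i ∈ s, (-g) i • v i = 0 := by simp [neg_smul, sum_neg_distrib, hg]
  simpa using coeff_nonpos_of_sum_smul_eq_zero f hf hv hg' i hi

def rootReflection (β : F) : F ≃ₗᵢ[ℝ] F := (ℝ ∙ β)ᗮ.reflection

theorem rootReflection_apply (β v : F) :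
    rootReflection β v = v - (2 * ⟪β, v⟫ / ⟪β, β⟫) • β := by
  rw [rootReflection, Submodule.reflection_orthogonal_apply,
    Submodule.reflection_singleton_apply, real_inner_self_eq_norm_sq]
  simp only [RCLike.ofReal_real_eq_id, id_eq]
  rw [neg_sub, two_smul, ← add_smul]
  congr 2
  ring

theorem rootReflection_rootReflection (β v : F) : rootReflection β (rootReflection β v) = v :=
  Submodule.reflection_reflection _ v

theorem rootReflection_inv (β : F) : (rootReflection β)⁻¹ = rootReflection β :=
  Submodule.reflection_inv

theorem rootReflection_mul_self (β : F) : rootReflection β * rootReflection β = 1 :=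
  Submodule.reflection_mul_reflection _

theorem rootReflection_apply_self (β : F) : rootReflection β β = -β :=
  Submodule.reflection_orthogonalComplement_singleton_eq_neg β

theorem rootReflection_map (w : F ≃ₗᵢ[ℝ] F) (β : F) :
    rootReflection (w β) = w * rootReflection β * w⁻¹ := by
  refine LinearIsometryEquiv.ext fun v => ?_
  have hv : ⟪w β, v⟫ = ⟪β, w.symm v⟫ := by
    rw [← w.inner_map_map β (w.symm v), w.apply_symm_apply]
  change rootReflection (w β) v = w (rootReflection β (w.symm v))
  rw [rootReflection_apply, rootReflection_apply, hv, w.inner_map_map, map_sub, map_smul,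
    w.apply_symm_apply]

end InnerProductSpace

theorem Nat.two_mul_card_subtype_of_involutive {α : Type*} [Finite α] {σ : α → α}
    (hσ : Function.Involutive σ) (p : α → Prop) (hp : ∀ a, p (σ a) ↔ ¬ p a) :
    2 * Nat.card {a // p a} = Nat.card α := by
  have e : {a // p a} ≃ {a // ¬ p a} :=
    (hσ.toPerm σ).subtypeEquiv fun a => by rw [Function.Involutive.coe_toPerm, hp, not_not]
  rw [two_mul]
  nth_rewrite 2 [Nat.card_congr e]
  rw [← Nat.card_sum, Nat.card_congr (Equiv.sumCompl p)]

local notation "E" => EuclideanSpace ℝ (Fin n)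

theorem isReflectionIn_rootReflection (β : E) : IsReflectionIn β (rootReflection β) :=
  rootReflection_apply β

theorem IsReflectionIn.eq_rootReflection {β : E} {w : E ≃ₗᵢ[ℝ] E} (h : IsReflectionIn β w) :
    w = rootReflection β :=
  LinearIsometryEquiv.ext fun v => by rw [h v, rootReflection_apply]

theorem rootReflection_mem_parabolicSubgroup {Γ : Finset E} {α : E} (hα : α ∈ Γ) :
    rootReflection α ∈ parabolicSubgroup Γ :=
  Subgroup.subset_closure ⟨α, hα, isReflectionIn_rootReflection α⟩

namespace CrystRootSystem

variable (R : CrystRootSystem n)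

def posForm : E →ₗ[ℝ] ℝ := R.pos_def.choose

theorem posForm_ne_zero {β : E} (hβ : β ∈ R.roots) : R.posForm β ≠ 0 :=
  R.pos_def.choose_spec.1 β hβ

theorem mem_pos_iff {β : E} : β ∈ R.pos ↔ β ∈ R.roots ∧ 0 < R.posForm β :=
  R.pos_def.choose_spec.2 β

variable {R}

theorem mem_roots_of_mem_pos {β : E} (hβ : β ∈ R.pos) : β ∈ R.roots :=
  (R.mem_pos_iff.1 hβ).1

theorem posForm_pos {β : E} (hβ : β ∈ R.pos) : 0 < R.posForm β :=
  (R.mem_pos_iff.1 hβ).2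

theorem mem_pos_of_mem_simples {α : E} (hα : α ∈ R.simples) : α ∈ R.pos :=
  (mem_filter.1 hα).1

theorem neg_mem_pos_iff {γ : E} (hγ : γ ∈ R.roots) : -γ ∈ R.pos ↔ γ ∉ R.pos := by
  rw [R.mem_pos_iff, R.mem_pos_iff, map_neg, neg_pos]
  have := R.posForm_ne_zero hγ
  constructor
  · rintro ⟨-, hneg⟩ ⟨-, hpos⟩
    linarith
  · intro h
    exact ⟨R.neg_mem γ hγ, this.lt_or_gt.resolve_right fun hpos => h ⟨hγ, hpos⟩⟩

theorem inner_self_pos {β : E} (hβ : β ∈ R.roots) : 0 < ⟪β, β⟫ :=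
  real_inner_self_pos.2 (R.nonzero β hβ)

theorem eq_of_mem_pos_of_eq_smul {α β : E} (hα : α ∈ R.pos) (hβ : β ∈ R.pos) {c : ℝ}
    (h : β = c • α) : β = α := by
  subst h
  rcases R.reduced α (mem_roots_of_mem_pos hα) c (mem_roots_of_mem_pos hβ) with rfl | rfl
  · exact one_smul ℝ α
  · have := posForm_pos hβ
    rw [map_smul, neg_one_smul, neg_pos] at this
    exact absurd (posForm_pos hα) this.not_gt

theorem pos_strong_induction {P : E → Prop}
    (ih : ∀ β ∈ R.pos, (∀ γ ∈ R.pos, R.posForm γ < R.posForm β → P γ) → P β) :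
    ∀ β ∈ R.pos, P β := by
  intro β hβ
  exact (R.pos.finite_toSet.wellFoundedOn (r := fun γ δ => R.posForm γ < R.posForm δ)).induction
    hβ ih

theorem pos_induction {P : E → Prop} (simple : ∀ α ∈ R.simples, P α)
    (add : ∀ γ ∈ R.pos, ∀ δ ∈ R.pos, P γ → P δ → P (γ + δ)) : ∀ β ∈ R.pos, P β := by
  refine pos_strong_induction fun β hβ ih => ?_
  by_cases hs : β ∈ R.simples
  · exact simple β hs
  obtain ⟨γ, hγ, δ, hδ, rfl⟩ : ∃ γ ∈ R.pos, ∃ δ ∈ R.pos, β = γ + δ := by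
    by_contra h
    exact hs (mem_filter.2 ⟨hβ, h⟩)
  have hfγ := posForm_pos hγ
  have hfδ := posForm_pos hδ
  exact add γ hγ δ hδ (ih γ hγ (by rw [map_add]; linarith)) (ih δ hδ (by rw [map_add]; linarith))

theorem rootReflection_apply_mem_roots {α β : E} (hα : α ∈ R.roots) (hβ : β ∈ R.roots) :
    rootReflection α β ∈ R.roots := by
  rw [rootReflection_apply]
  exact R.reflect_mem α hα β hβ

theorem rootReflection_mem_weyl {β : E} (hβ : β ∈ R.roots) : rootReflection β ∈ R.weyl :=
  Subgroup.subset_closure ⟨β, hβ, isReflectionIn_rootReflection β⟩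

theorem apply_mem_roots_of_mem_weyl {w : E ≃ₗᵢ[ℝ] E} (hw : w ∈ R.weyl) :
    ∀ γ ∈ R.roots, w γ ∈ R.roots := by
  induction hw using Subgroup.closure_induction'' with
  | mem w hw =>
    obtain ⟨δ, hδ, hw⟩ := hw
    rw [hw.eq_rootReflection]
    exact fun γ => rootReflection_apply_mem_roots hδ
  | inv_mem w hw =>
    obtain ⟨δ, hδ, hw⟩ := hw
    rw [hw.eq_rootReflection, rootReflection_inv]
    exact fun γ => rootReflection_apply_mem_roots hδ
  | one => exact fun γ hγ => hγ
  | mul w w' _ _ hw hw' => exact fun γ hγ => hw _ (hw' γ hγ)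

variable (R) in
instance finite_weyl : Finite R.weyl := by
  let restrict (w : R.weyl) (γ : R.roots) : R.roots :=
    ⟨w.1 γ, apply_mem_roots_of_mem_weyl w.2 γ γ.2⟩
  refine Finite.of_injective restrict fun w w' h => Subtype.ext ?_
  refine LinearIsometryEquiv.toLinearEquiv_injective (LinearEquiv.toLinearMap_injective ?_)
  refine LinearMap.ext_on R.spanning fun γ hγ => ?_
  exact congrArg Subtype.val (congrFun h ⟨γ, hγ⟩)

theorem parabolicSubgroup_le_weyl {Γ : Finset E} (hΓ : Γ ⊆ R.simples) :
    parabolicSubgroup Γ ≤ R.weyl :=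
  Subgroup.closure_mono fun _ ⟨α, hα, h⟩ =>
    ⟨α, mem_roots_of_mem_pos (mem_pos_of_mem_simples (hΓ hα)), h⟩

theorem sub_mem_roots_of_inner_pos {α β : E} (hα : α ∈ R.roots) (hβ : β ∈ R.roots)
    (hne : α ≠ β) (h : 0 < ⟪α, β⟫) : β - α ∈ R.roots := by
  obtain ⟨k, hk⟩ := R.cryst α hα β hβ
  obtain ⟨m, hm⟩ := R.cryst β hβ α hα
  rw [real_inner_comm] at hm
  have hαα := R.inner_self_pos hα
  have hββ := R.inner_self_pos hβ
  have hk0 : 0 < k := by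
    have : (0 : ℝ) < k := hk ▸ by positivity
    exact_mod_cast this
  have hm0 : 0 < m := by
    have : (0 : ℝ) < m := hm ▸ by positivity
    exact_mod_cast this
  have hkm : k * m ≤ 4 := by
    have : (k : ℝ) * m ≤ 4 := by
      rw [← hk, ← hm, div_mul_div_comm, div_le_iff₀ (mul_pos hαα hββ)]
      nlinarith [real_inner_mul_inner_self_le α β]
    exact_mod_cast this
  have hk4 : k ≤ 4 := by nlinarith
  rcases (show k = 1 ∨ m = 1 ∨ (k = 2 ∧ m = 2) by interval_cases k <;> omega)
    with hk1 | hm1 | ⟨hk2, hm2⟩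
  · have := R.reflect_mem α hα β hβ
    rwa [hk, hk1, Int.cast_one, one_smul] at this
  · have := R.neg_mem _ (R.reflect_mem β hβ α hα)
    rwa [real_inner_comm, hm, hm1, Int.cast_one, one_smul, neg_sub] at this
  · -- both Cartan integers equal to 2 force `⟪α, α⟫ = ⟪α, β⟫ = ⟪β, β⟫`, i.e. `α = β`
    rw [hk2, Int.cast_ofNat, div_eq_iff hαα.ne'] at hk
    rw [hm2, Int.cast_ofNat, div_eq_iff hββ.ne'] at hm
    refine absurd (sub_eq_zero.1 (real_inner_self_nonpos.1 ?_)) hne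
    rw [inner_sub_left, inner_sub_right, inner_sub_right, real_inner_comm α β]
    linarith

theorem inner_nonpos_of_mem_simples {α β : E} (hα : α ∈ R.simples) (hβ : β ∈ R.simples)
    (hne : α ≠ β) : ⟪α, β⟫ ≤ 0 := by
  by_contra! h
  have hαp := mem_pos_of_mem_simples hα
  have hβp := mem_pos_of_mem_simples hβ
  have hsub := sub_mem_roots_of_inner_pos (mem_roots_of_mem_pos hαp) (mem_roots_of_mem_pos hβp)
    hne h
  by_cases hpos : β - α ∈ R.pos
  · exact (mem_filter.1 hβ).2 ⟨β - α, hpos, α, hαp, (sub_add_cancel β α).symm⟩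
  · have : α - β ∈ R.pos := by
      rw [← neg_sub]
      exact (neg_mem_pos_iff hsub).2 hpos
    exact (mem_filter.1 hα).2 ⟨α - β, this, β, hβp, (sub_add_cancel α β).symm⟩

variable (R) in
theorem linearIndependent_simples : LinearIndependent ℝ ((↑) : R.simples → E) :=
  linearIndependent_of_pairwise_inner_nonpos R.posForm
    (fun α => posForm_pos (mem_pos_of_mem_simples α.2))
    fun α β hne => inner_nonpos_of_mem_simples α.2 β.2 (Subtype.coe_ne_coe.2 hne)

variable (R) in
theorem span_simples : Submodule.span ℝ (Set.range ((↑) : R.simples → E)) = ⊤ := by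
  have hpos : ∀ β ∈ R.pos, β ∈ Submodule.span ℝ (R.simples : Set E) :=
    pos_induction (fun α hα => Submodule.subset_span hα) fun _ _ _ _ => add_mem
  rw [Subtype.range_coe_subtype, Finset.setOfPred_mem, eq_top_iff, ← R.spanning, Submodule.span_le]
  intro γ hγ
  by_cases h : γ ∈ R.pos
  · exact hpos γ h
  · simpa using Submodule.neg_mem _ (hpos _ ((neg_mem_pos_iff hγ).2 h))

variable (R) in
def simpleBasis : Module.Basis R.simples ℝ E :=
  Module.Basis.mk R.linearIndependent_simples R.span_simples.ge

theorem simpleBasis_apply (α : R.simples) : R.simpleBasis α = α :=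
  Module.Basis.mk_apply _ _ _

theorem simpleBasis_repr_self {α : E} (hα : α ∈ R.simples) :
    R.simpleBasis.repr α = Finsupp.single ⟨α, hα⟩ 1 := by
  simpa only [simpleBasis_apply] using R.simpleBasis.repr_self ⟨α, hα⟩

theorem simpleBasis_repr_nonneg {β : E} (hβ : β ∈ R.pos) (i : R.simples) :
    0 ≤ R.simpleBasis.repr β i := by
  refine pos_induction (P := fun β => 0 ≤ R.simpleBasis.repr β i) (fun α hα => ?_)
    (fun γ _ δ _ hγ hδ => ?_) β hβ
  · rw [simpleBasis_repr_self hα, Finsupp.single_apply]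
    split_ifs <;> norm_num
  · rw [map_add, Finsupp.add_apply]
    exact add_nonneg hγ hδ

theorem simpleBasis_repr_eq_zero_of_mem_span {Γ : Finset E} (hΓ : Γ ⊆ R.simples) {β : E}
    (hβ : β ∈ Submodule.span ℝ (Γ : Set E)) {i : R.simples} (hi : (i : E) ∉ Γ) :
    R.simpleBasis.repr β i = 0 := by
  have : Submodule.span ℝ (Γ : Set E) ≤ LinearMap.ker (R.simpleBasis.coord i) := by
    refine Submodule.span_le.2 fun α hα => ?_
    rw [SetLike.mem_coe, LinearMap.mem_ker, Module.Basis.coord_apply, simpleBasis_repr_self (hΓ hα),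
      Finsupp.single_apply, if_neg]
    rintro rfl
    exact hi hα
  exact this hβ

theorem rootReflection_apply_mem_pos {α β : E} (hα : α ∈ R.simples) (hβ : β ∈ R.pos)
    (hne : β ≠ α) : rootReflection α β ∈ R.pos := by
  set b := R.simpleBasis
  obtain ⟨i, hi, hpos⟩ : ∃ i : R.simples, i ≠ ⟨α, hα⟩ ∧ 0 < b.repr β i := by
    by_contra! h
    refine hne (eq_of_mem_pos_of_eq_smul (mem_pos_of_mem_simples hα) hβ
      (c := b.repr β ⟨α, hα⟩) ?_)
    conv_lhs => rw [← b.sum_repr β]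
    rw [Fintype.sum_eq_single ⟨α, hα⟩ fun j hj => by
      rw [le_antisymm (h j hj) (simpleBasis_repr_nonneg hβ j), zero_smul], simpleBasis_apply]
  -- reflecting in `α` only changes the `α`-coordinate, so the positive `i`-coordinate survives
  have hcoord : b.repr (rootReflection α β) i = b.repr β i := by
    rw [rootReflection_apply, map_sub, map_smul, simpleBasis_repr_self hα]
    simp [hi.symm]
  have hroot := rootReflection_apply_mem_roots (mem_roots_of_mem_pos (mem_pos_of_mem_simples hα))
    (mem_roots_of_mem_pos hβ)
  by_contra hneg
  have := simpleBasis_repr_nonneg ((neg_mem_pos_iff hroot).2 hneg) i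
  rw [map_neg, Finsupp.neg_apply, hcoord] at this
  linarith

theorem exists_mem_inner_pos {Γ : Finset E} (hΓ : Γ ⊆ R.simples) {β : E} (hβ : β ∈ R.pos)
    (hspan : β ∈ Submodule.span ℝ (Γ : Set E)) : ∃ α ∈ Γ, 0 < ⟪α, β⟫ := by
  set b := R.simpleBasis
  have hsum : ⟪β, β⟫ = ∑ i, b.repr β i * ⟪(i : E), β⟫ := by
    nth_rewrite 1 [← b.sum_repr β]
    simp only [sum_inner, real_inner_smul_left, b, simpleBasis_apply]
  obtain ⟨i, -, hi⟩ : ∃ i ∈ univ, 0 < b.repr β i * ⟪(i : E), β⟫ := by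
    refine exists_lt_of_sum_lt ?_
    rw [sum_const_zero, ← hsum]
    exact inner_self_pos (mem_roots_of_mem_pos hβ)
  have hiΓ : (i : E) ∈ Γ := by
    by_contra h
    rw [simpleBasis_repr_eq_zero_of_mem_span hΓ hspan h, zero_mul] at hi
    exact lt_irrefl 0 hi
  exact ⟨i, hiΓ, pos_of_mul_pos_right hi (simpleBasis_repr_nonneg hβ i)⟩

theorem rootReflection_mem_parabolicSubgroup_of_mem_span {Γ : Finset E} (hΓ : Γ ⊆ R.simples) :
    ∀ β ∈ R.pos, β ∈ Submodule.span ℝ (Γ : Set E) →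
      rootReflection β ∈ parabolicSubgroup Γ := by
  refine pos_strong_induction fun β hβ ih hspan => ?_
  obtain ⟨α, hαΓ, hαβ⟩ := exists_mem_inner_pos hΓ hβ hspan
  have hsα := rootReflection_mem_parabolicSubgroup hαΓ
  by_cases hβα : β = α
  · rwa [hβα]
  have hα := mem_pos_of_mem_simples (hΓ hαΓ)
  have hβ' : rootReflection α β ∈ R.pos := rootReflection_apply_mem_pos (hΓ hαΓ) hβ hβα
  have hlt : R.posForm (rootReflection α β) < R.posForm β := by
    have hαα := inner_self_pos (mem_roots_of_mem_pos hα)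
    have := posForm_pos hα
    rw [rootReflection_apply, map_sub, map_smul, smul_eq_mul, sub_lt_self_iff]
    positivity
  have hspan' : rootReflection α β ∈ Submodule.span ℝ (Γ : Set E) := by
    rw [rootReflection_apply]
    exact Submodule.sub_mem _ hspan (Submodule.smul_mem _ _ (Submodule.subset_span hαΓ))
  have hconj : rootReflection β =
      rootReflection α * rootReflection (rootReflection α β) * (rootReflection α)⁻¹ := by
    rw [← rootReflection_map, rootReflection_rootReflection]
  rw [hconj]
  exact mul_mem (mul_mem hsα (ih _ hβ' hlt hspan')) (inv_mem hsα)

theorem card_neg_mem_pos_div_card {H : Subgroup (E ≃ₗᵢ[ℝ] E)} (hH : H ≤ R.weyl) {β : E}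
    (hβ : β ∈ R.pos) (hs : rootReflection β ∈ H) :
    (Nat.card {w : H // -(w.1 β) ∈ R.pos} : ℚ) / (Nat.card H : ℚ) = 1 / 2 := by
  have : Finite H := Finite.of_injective _ (Subgroup.inclusion_injective hH)
  let s : H := ⟨rootReflection β, hs⟩
  have hss : s * s = 1 := Subtype.ext (rootReflection_mul_self β)
  have hσ : Function.Involutive (· * s) := fun w => by
    simp only [mul_assoc, hss, mul_one]
  have hp (w : H) : -((w * s).1 β) ∈ R.pos ↔ ¬ -(w.1 β) ∈ R.pos := by
    have hw := apply_mem_roots_of_mem_weyl (hH w.2) β (mem_roots_of_mem_pos hβ)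
    rw [Subgroup.coe_mul, LinearIsometryEquiv.coe_mul, Function.comp_apply,
      rootReflection_apply_self, map_neg, neg_neg, neg_mem_pos_iff hw, not_not]
  have hcard := Nat.two_mul_card_subtype_of_involutive hσ (fun w : H => -(w.1 β) ∈ R.pos) hp
  have hpos : (Nat.card {w : H // -(w.1 β) ∈ R.pos} : ℚ) ≠ 0 := by
    have : 0 < Nat.card H := Nat.card_pos
    exact_mod_cast (show Nat.card {w : H // -(w.1 β) ∈ R.pos} ≠ 0 by omega)
  rw [← hcard, Nat.cast_mul, Nat.cast_ofNat]
  field_simp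

end CrystRootSystem

/-- For `Γ` a set of simple roots and `β` a positive root in the span of `Γ`,
the proportion of elements of the Weyl group sending `β` to a negative root
equals the corresponding proportion within the parabolic subgroup `W_Γ`. -/
theorem parabolic_proportion (R : CrystRootSystem n)
    (Γ : Finset (EuclideanSpace ℝ (Fin n))) (hΓ : Γ ⊆ R.simples)
    (β : EuclideanSpace ℝ (Fin n)) (hβ : β ∈ R.pos)
    (hspan : β ∈ Submodule.span ℝ (Γ : Set (EuclideanSpace ℝ (Fin n)))) :
    (Nat.card {w : R.weyl // -(w.1 β) ∈ R.pos} : ℚ) / (Nat.card R.weyl : ℚ) =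
      (Nat.card {w : parabolicSubgroup Γ // -(w.1 β) ∈ R.pos} : ℚ) /
        (Nat.card (parabolicSubgroup Γ) : ℚ) := by
  open CrystRootSystem in
  rw [card_neg_mem_pos_div_card le_rfl hβ (rootReflection_mem_weyl (mem_roots_of_mem_pos hβ)),
    card_neg_mem_pos_div_card (parabolicSubgroup_le_weyl hΓ) hβ
      (rootReflection_mem_parabolicSubgroup_of_mem_span hΓ β hβ hspan)]

end
end
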